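/- arXiv:1705.00465 — 6 statements merged into one kernel-verified Lean document; each statement's English description precedes it below -/
import Mathlib

section
/- Deterministic uniform approximation at the true quantile function: let γ0 > −1/2, γ0 ≠ 0, let k_n → ∞ and r_n → ∞ with r_n = O(k_n^δ) for some 0 < δ < min(1/2, γ0 + 1/2), and let H_n be the closed ball in ℝ³ of center 0 and radius r_n. Then sup over s ∈ [1/(k_n+1), k_n/(k_n+1)] and h = (h1,h2,h3) ∈ H_n of | (−log s)^{−1} ( 1 + (γ0 + h1/√k_n) · (Q_{γ0}(s) − h2/√k_n)/(1 + h3/√k_n) )^{−1/(γ0 + h1/√k_n)} − 1 | converges to 0 as n → ∞. -/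
open MeasureTheory ProbabilityTheory Filter Real Topology Matrix Set

noncomputable section

namespace BMMLE

/-- The real-valued GEV log-likelihood `ℓ(θ, x)` with `θ = (γ, μ, σ)`
(junk value off the support; for `γ = 0` the usual Gumbel limit formula). -/
def ll (θ : Fin 3 → ℝ) (x : ℝ) : ℝ :=
  if θ 0 = 0 then -((x - θ 1) / θ 2) - Real.exp (-((x - θ 1) / θ 2)) - Real.log (θ 2)
  else -(1 + 1 / θ 0) * Real.log (1 + θ 0 * ((x - θ 1) / θ 2))
    - (1 + θ 0 * ((x - θ 1) / θ 2)) ^ (-1 / θ 0) - Real.log (θ 2)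

/-- Partial derivative of a function of `θ ∈ ℝ³` in the `i`-th coordinate. -/
def pd (f : (Fin 3 → ℝ) → ℝ) (i : Fin 3) (θ : Fin 3 → ℝ) : ℝ :=
  deriv (fun t => f (Function.update θ i t)) (θ i)

/-- The score `∂ℓ/∂θᵢ`. -/
def score (i : Fin 3) (θ : Fin 3 → ℝ) (x : ℝ) : ℝ := pd (fun θ' => ll θ' x) i θ

/-- Second derivatives `∂²ℓ/∂θᵢ∂θⱼ`. -/
def hessll (i j : Fin 3) (θ : Fin 3 → ℝ) (x : ℝ) : ℝ := pd (fun θ' => score j θ' x) i θ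

/-- Mixed derivative `∂²ℓ/∂x∂θᵢ`. -/
def dxscore (i : Fin 3) (θ : Fin 3 → ℝ) (x : ℝ) : ℝ := deriv (fun y => score i θ y) x

/-- θ₀ = (γ, 0, 1). -/
def θ₀ (γ : ℝ) : Fin 3 → ℝ := ![γ, 0, 1]

/-- The GEV quantile function `Q_γ(s)`. -/
def Qgev (γ s : ℝ) : ℝ :=
  if γ = 0 then -Real.log (-Real.log s) else ((-Real.log s) ^ (-γ) - 1) / γ

/-- The second-order limit function `H_{γ,ρ}(x) = ∫_1^x t^{γ-1} ∫_1^t u^{ρ-1} du dt`. -/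
def Hso (γ ρ x : ℝ) : ℝ := ∫ t in (1:ℝ)..x, t ^ (γ - 1) * ∫ u in (1:ℝ)..t, u ^ (ρ - 1)

/-- The Fisher information matrix `I_{θ₀} = -∫₀¹ ∂²ℓ/∂θ∂θᵀ(θ₀, Q_γ(s)) ds`. -/
def infoMatrix (γ : ℝ) : Matrix (Fin 3) (Fin 3) ℝ :=
  Matrix.of fun i j => -∫ s in Set.Ioo (0:ℝ) 1, hessll i j (θ₀ γ) (Qgev γ s)

/-- The bias vector `b = ∫₀¹ ∂²ℓ/∂x∂θ(θ₀, Q_γ(s)) H_{γ,ρ}(1/(-log s)) ds`. -/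
def biasVec (γ ρ : ℝ) : Fin 3 → ℝ := fun i =>
  ∫ s in Set.Ioo (0:ℝ) 1, dxscore i (θ₀ γ) (Qgev γ s) * Hso γ ρ (1 / (-Real.log s))

/-- The (nondegenerate) trivariate normal distribution `N(μ, S)`, defined via its
Lebesgue density. -/
def mvNormal (μ : Fin 3 → ℝ) (S : Matrix (Fin 3) (Fin 3) ℝ) : Measure (Fin 3 → ℝ) :=
  (volume : Measure (Fin 3 → ℝ)).withDensity fun x =>
    ENNReal.ofReal (Real.sqrt (((2 * Real.pi) ^ (3 : ℕ) * S.det)⁻¹) *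
      Real.exp (-(1 / 2) * ((x - μ) ⬝ᵥ (S⁻¹ *ᵥ (x - μ)))))

/-- Convergence in distribution of `ℝ³`-valued random vectors: integrals of every
bounded continuous function converge. -/
def TendstoInDist {Ω : Type*} [MeasurableSpace Ω] (P : Measure Ω)
    (Y : ℕ → Ω → (Fin 3 → ℝ)) (ν : Measure (Fin 3 → ℝ)) : Prop :=
  ∀ f : BoundedContinuousFunction (Fin 3 → ℝ) ℝ,
    Tendsto (fun n => ∫ ω, f (Y n ω) ∂P) atTop (𝓝 (∫ x, f x ∂ν))

/-- The left-continuous generalized inverse `V = (-1/log F)^←`. -/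
def Vfun (F : ℝ → ℝ) (t : ℝ) : ℝ := sInf {x : ℝ | t ≤ -1 / Real.log (F x)}

/-- The `i`-th block maximum of block size `m`: `max_{(i-1)m < j ≤ im} X_j`. -/
def blockMax {Ω : Type*} (X : ℕ → Ω → ℝ) (i m : ℕ) (ω : Ω) : ℝ :=
  sSup ((fun j => X j ω) '' Set.Ioc ((i - 1) * m) (i * m))

/-- The second-order condition: `γ₀ > -1/2`, `ρ ≤ 0`, `a` positive, `A` of constant
sign tending to `0`, and the second-order regular variation limit for
`V = (-1/log F)^←` with `H_{γ₀,ρ}` as limit function. -/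
structure SecondOrder (F : ℝ → ℝ) (γ₀ ρ : ℝ) (a A : ℝ → ℝ) : Prop where
  hγ : -(1/2) < γ₀
  hρ : ρ ≤ 0
  ha : ∀ t, 0 < a t
  hsign : (∀ t, 0 < A t) ∨ (∀ t, A t < 0)
  hA0 : Tendsto A atTop (𝓝 0)
  hlim : ∀ x > 0, Tendsto (fun t =>
      ((Vfun F (t * x) - Vfun F t) / a t -
        (if γ₀ = 0 then Real.log x else (x ^ γ₀ - 1) / γ₀)) / A t)
    atTop (𝓝 (Hso γ₀ ρ x))

/-- The local log-likelihood process
`L̃_{k,m}(h) = Σ_{i=1}^k ℓ(θ₀ + h/√k, (M_{i,m} - b_m)/a_m) - k log a_m`. -/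
def Ltil {Ω : Type*} (X : ℕ → Ω → ℝ) (γ : ℝ) (k m : ℕ) (am bm : ℝ)
    (ω : Ω) (h : Fin 3 → ℝ) : ℝ :=
  (∑ i ∈ Finset.Icc 1 k,
    ll (fun j => θ₀ γ j + h j / Real.sqrt (k : ℝ)) ((blockMax X i m ω - bm) / am))
  - (k : ℝ) * Real.log am

/-- The normalized score vector
`G̃_{k,m} = k^{-1/2} Σ_{i=1}^k ∂ℓ/∂θ(θ₀, (M_{i,m} - b_m)/a_m)`. -/
def Gtil {Ω : Type*} (X : ℕ → Ω → ℝ) (γ : ℝ) (k m : ℕ) (am bm : ℝ)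
    (ω : Ω) : Fin 3 → ℝ := fun j =>
  (Real.sqrt (k : ℝ))⁻¹ *
    ∑ i ∈ Finset.Icc 1 k, score j (θ₀ γ) ((blockMax X i m ω - bm) / am)

end BMMLE

/-! With `t = -log s`, the perturbed GEV base is `t^(-γ₀) B`, where `B - 1 = O(e (t^γ₀ + 1))`
and `e` bounds the perturbations `u = h 0/√k`, `h 1/√k`, `h 2/√k`. The expression therefore equals
`exp (-(u log t + log B)/(γ₀ + u)) = 1 + O(e (|log t| + t^γ₀ + 1))`. On the range of `s`,
`t ∈ [1/(k+1), log(k+1)]` and `e = O(k^(δ-1/2))`, so the error is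
`O(k^(δ-1/2) (log k + k^(-γ₀) + (log k)^γ₀ + 1))`, which tends to `0` precisely because
`δ < min (1/2) (γ₀ + 1/2)`. -/

namespace BMMLE

lemma abs_log_le_two_mul_abs_sub_one {x : ℝ} (hx : |x - 1| ≤ 1 / 2) :
    |log x| ≤ 2 * |x - 1| := by
  have h := abs_log_sub_add_sum_range_le (x := 1 - x) (by rw [abs_sub_comm]; linarith) 0
  simp only [Finset.range_zero, Finset.sum_empty, zero_add, pow_one, sub_sub_cancel] at h
  rw [abs_sub_comm] at h
  calc |log x| ≤ |x - 1| / (1 - |x - 1|) := h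
    _ ≤ 2 * |x - 1| := by
      rw [div_le_iff₀ (by linarith)]
      nlinarith [abs_nonneg (x - 1)]

lemma inv_mul_rpow_eq_exp {t A γ u : ℝ} (ht : 0 < t) (hA : 0 < A) (hγu : γ + u ≠ 0) :
    t⁻¹ * A ^ (-1 / (γ + u)) = exp (-(u * log t + log (t ^ γ * A)) / (γ + u)) := by
  rw [log_mul (rpow_pos_of_pos ht γ).ne' hA.ne', log_rpow ht, rpow_def_of_pos hA,
    show t⁻¹ = exp (-log t) by rw [exp_neg, exp_log ht], ← exp_add]
  congr 1
  field_simp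
  ring

lemma abs_mul_perturbed_base_sub_one_le {γ P u v w e : ℝ} (hγ : γ ≠ 0) (hP : 0 < P)
    (hu : |u| ≤ e) (hv : |v| ≤ e) (hw : |w| ≤ e) (he : e ≤ 1 / 2) :
    |P * (1 + (γ + u) * (((P⁻¹ - 1) / γ - v) / (1 + w))) - 1|
      ≤ 2 * (2 + |γ|⁻¹ + |γ|) * (e * (P + 1)) := by
  have hγ' : 0 < |γ| := abs_pos.2 hγ
  have hw' : 1 / 2 ≤ 1 + w := by linarith [neg_abs_le w]
  have hid : P * (1 + (γ + u) * (((P⁻¹ - 1) / γ - v) / (1 + w))) - 1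
      = ((P - 1) * (w - u / γ) - (γ + u) * v * P) / (1 + w) := by
    field_simp
    ring
  have hnum : |(P - 1) * (w - u / γ) - (γ + u) * v * P| ≤ (2 + |γ|⁻¹ + |γ|) * (e * (P + 1)) :=
    calc _ ≤ |P - 1| * (|w| + |u| / |γ|) + (|γ| + |u|) * |v| * P := by
          refine (abs_sub _ _).trans (add_le_add ?_ ?_)
          · rw [abs_mul, ← abs_div]
            exact mul_le_mul_of_nonneg_left (abs_sub _ _) (abs_nonneg _)
          · rw [abs_mul, abs_mul, abs_of_pos hP]
            gcongr
            exact abs_add_le _ _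
      _ ≤ (P + 1) * (e + e / |γ|) + (|γ| + 1 / 2) * e * P := by
          have : |P - 1| ≤ P + 1 := abs_le.2 ⟨by linarith, by linarith⟩
          gcongr
          linarith
      _ ≤ (2 + |γ|⁻¹ + |γ|) * (e * (P + 1)) := by
          have he0 : 0 ≤ e := (abs_nonneg u).trans hu
          rw [div_eq_mul_inv]
          nlinarith [mul_nonneg (mul_nonneg he0 hP.le) hγ'.le, inv_nonneg.2 hγ'.le]
  have hw0 : 0 < 1 + w := by linarith
  rw [hid, abs_div, abs_of_pos hw0, div_le_iff₀ hw0]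
  nlinarith [abs_nonneg ((P - 1) * (w - u / γ) - (γ + u) * v * P)]

lemma half_abs_le_abs_add {γ u : ℝ} (hu : |u| ≤ |γ| / 2) : |γ| / 2 ≤ |γ + u| := by
  have := abs_sub (γ + u) u
  rw [add_sub_cancel_right] at this
  linarith

lemma abs_neg_mul_add_log_div_le {γ u L B : ℝ} (hγ : γ ≠ 0) (hu : |u| ≤ |γ| / 2)
    (hB : |B - 1| ≤ 1 / 2) :
    |-(u * L + log B) / (γ + u)| ≤ 2 / |γ| * (|u| * |L| + 2 * |B - 1|) := by
  have hγ' : 0 < |γ| := abs_pos.2 hγ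
  have hγu := half_abs_le_abs_add hu
  rw [abs_div, abs_neg, div_le_iff₀ (by linarith)]
  calc |u * L + log B| ≤ |u| * |L| + 2 * |B - 1| := by
        rw [← abs_mul]
        linarith [abs_add_le (u * L) (log B), abs_log_le_two_mul_abs_sub_one hB]
    _ = 2 / |γ| * (|u| * |L| + 2 * |B - 1|) * (|γ| / 2) := by field_simp
    _ ≤ 2 / |γ| * (|u| * |L| + 2 * |B - 1|) * |γ + u| := by gcongr

lemma exists_abs_perturbed_gev_sub_one_le {γ : ℝ} (hγ : γ ≠ 0) :
    ∃ K η : ℝ, 0 < K ∧ 0 < η ∧ ∀ t u v w e : ℝ, 0 < t → |u| ≤ e → |v| ≤ e → |w| ≤ e →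
      e * (|log t| + t ^ γ + 1) ≤ η →
      |t⁻¹ * (1 + (γ + u) * (((t ^ (-γ) - 1) / γ - v) / (1 + w))) ^ (-1 / (γ + u)) - 1|
        ≤ K * (e * (|log t| + t ^ γ + 1)) := by
  set c := 2 * (2 + |γ|⁻¹ + |γ|)
  set K₀ := 2 * (1 + 2 * c) / |γ|
  have hc : 0 < c := by positivity
  have hK₀ : 0 < K₀ := by positivity
  refine ⟨2 * K₀, min (min (1 / 2) (|γ| / 2)) (min (1 / (2 * c)) (1 / K₀)),
    by positivity, by positivity, ?_⟩
  intro t u v w e ht hu hv hw hρη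
  set ρ := e * (|log t| + t ^ γ + 1)
  have hP : 0 < t ^ γ := rpow_pos_of_pos ht γ
  have he0 : 0 ≤ e := (abs_nonneg u).trans hu
  have heP : e * (t ^ γ + 1) ≤ ρ :=
    mul_le_mul_of_nonneg_left (by linarith [abs_nonneg (log t)]) he0
  have heL : e * |log t| ≤ ρ := mul_le_mul_of_nonneg_left (by linarith) he0
  have he : e ≤ ρ := by nlinarith
  obtain ⟨⟨he2, heγ⟩, hρc, hρK⟩ : (e ≤ 1 / 2 ∧ e ≤ |γ| / 2) ∧ c * ρ ≤ 1 / 2 ∧ K₀ * ρ ≤ 1 := by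
    simp only [le_min_iff] at hρη
    refine ⟨⟨he.trans hρη.1.1, he.trans hρη.1.2⟩, ?_, ?_⟩
    · rw [← le_div_iff₀' hc, div_div]; exact hρη.2.1
    · rw [← le_div_iff₀' hK₀]; exact hρη.2.2
  set A := 1 + (γ + u) * (((t ^ (-γ) - 1) / γ - v) / (1 + w))
  have hB : |t ^ γ * A - 1| ≤ c * ρ := by
    have := abs_mul_perturbed_base_sub_one_le hγ hP hu hv hw he2
    rw [← rpow_neg ht.le] at this
    exact this.trans (by gcongr)
  have hA : 0 < A := by
    have : 0 < t ^ γ * A := by linarith [(abs_le.1 (hB.trans hρc)).1]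
    exact pos_of_mul_pos_right this hP.le
  have hL : |-(u * log t + log (t ^ γ * A)) / (γ + u)| ≤ K₀ * ρ := by
    refine (abs_neg_mul_add_log_div_le hγ (hu.trans heγ) (hB.trans hρc)).trans ?_
    calc 2 / |γ| * (|u| * |log t| + 2 * |t ^ γ * A - 1|) ≤ 2 / |γ| * (ρ + 2 * (c * ρ)) := by
          gcongr
          exact (mul_le_mul_of_nonneg_right hu (abs_nonneg _)).trans heL
      _ = K₀ * ρ := by simp only [K₀]; ring
  have hγu0 : γ + u ≠ 0 :=
    abs_pos.1 ((half_pos (abs_pos.2 hγ)).trans_le (half_abs_le_abs_add (hu.trans heγ)))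
  rw [inv_mul_rpow_eq_exp ht hA hγu0]
  calc _ ≤ 2 * |-(u * log t + log (t ^ γ * A)) / (γ + u)| := abs_exp_sub_one_le (hL.trans hρK)
    _ ≤ 2 * K₀ * ρ := by linarith

lemma tendsto_rpow_mul_log_rpow_atTop {p : ℝ} (c : ℝ) (hp : p < 0) :
    Tendsto (fun y : ℝ => y ^ p * log y ^ c) atTop (𝓝 0) := by
  refine (isLittleO_log_rpow_rpow_atTop c (neg_pos.2 hp)).tendsto_div_nhds_zero.congr' ?_
  filter_upwards [eventually_gt_atTop 0] with y hy
  rw [rpow_neg hy.le, div_inv_eq_mul, mul_comm]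

lemma tendsto_rpow_mul_log_add_rpow_add_log_rpow_add_one {p b : ℝ} (c : ℝ) (hp : p < 0)
    (hpb : p + b < 0) :
    Tendsto (fun y : ℝ => y ^ p * (log y + y ^ b + log y ^ c + 1)) atTop (𝓝 0) := by
  have hlog := tendsto_rpow_mul_log_rpow_atTop 1 hp
  have hpow : Tendsto (fun y : ℝ => y ^ (p + b)) atTop (𝓝 0) := by
    simpa using tendsto_rpow_neg_atTop (neg_pos.2 hpb)
  have hone : Tendsto (fun y : ℝ => y ^ p) atTop (𝓝 0) := by
    simpa using tendsto_rpow_neg_atTop (neg_pos.2 hp)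
  have := ((hlog.add hpow).add (tendsto_rpow_mul_log_rpow_atTop c hp)).add hone
  simp only [add_zero] at this
  refine this.congr' ?_
  filter_upwards [eventually_gt_atTop 0] with y hy
  rw [rpow_one, rpow_add hy]
  ring

lemma neg_log_mem_Icc {x s : ℝ} (hx : 0 ≤ x) (hs : s ∈ Icc (1 / (x + 1)) (x / (x + 1))) :
    -log s ∈ Icc (x + 1)⁻¹ (log (x + 1)) := by
  have hs0 : 0 < s := lt_of_lt_of_le (by positivity) hs.1
  constructor
  · have : x / (x + 1) - 1 = -(x + 1)⁻¹ := by field_simp; ring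
    linarith [log_le_sub_one_of_pos hs0, hs.2]
  · have := log_le_log (by positivity) hs.1
    rw [one_div, log_inv] at this
    linarith

lemma abs_log_add_rpow_add_one_le {y t : ℝ} (γ : ℝ) (hy : 1 ≤ y) (ht : t ∈ Icc y⁻¹ (log y)) :
    |log t| + t ^ γ + 1 ≤ log y + y ^ (-γ) + log y ^ γ + 1 := by
  have hy0 : 0 < y := by linarith
  have ht0 : 0 < t := lt_of_lt_of_le (inv_pos.2 hy0) ht.1
  have hlogy : 0 ≤ log y := log_nonneg hy
  have hlog : |log t| ≤ log y := by
    refine abs_le.2 ⟨?_, ?_⟩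
    · have := log_le_log (inv_pos.2 hy0) ht.1
      rw [log_inv] at this
      linarith
    · exact (log_le_log ht0 ht.2).trans (log_le_self hlogy)
  have hpow : t ^ γ ≤ y ^ (-γ) + log y ^ γ := by
    rcases le_total γ 0 with hγ | hγ
    · have := rpow_le_rpow_of_nonpos (inv_pos.2 hy0) ht.1 hγ
      rw [inv_rpow hy0.le, ← rpow_neg hy0.le] at this
      linarith [rpow_nonneg hlogy γ]
    · linarith [rpow_le_rpow ht0.le ht.2 hγ, rpow_nonneg hy0.le (-γ)]
  linarith

lemma abs_div_sqrt_le {x b C δ : ℝ} (hx : 1 ≤ x) (hb : |b| ≤ C * (x + 1) ^ δ) :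
    |b / √x| ≤ √2 * C * (x + 1) ^ (δ - 1 / 2) := by
  have hx0 : 0 < x := by linarith
  have hsqrt : √(x + 1) ≤ √2 * √x := by
    rw [← sqrt_mul zero_le_two]
    exact sqrt_le_sqrt (by linarith)
  rw [rpow_sub (by linarith), ← sqrt_eq_rpow, abs_div, abs_of_pos (sqrt_pos.2 hx0),
    div_le_iff₀ (sqrt_pos.2 hx0)]
  have hC : 0 ≤ C * (x + 1) ^ δ := (abs_nonneg b).trans hb
  calc |b| ≤ C * (x + 1) ^ δ := hb
    _ = √2 * (C * (x + 1) ^ δ) / √(x + 1) * (√(x + 1) / √2) := by field_simp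
    _ ≤ √2 * (C * (x + 1) ^ δ) / √(x + 1) * √x := by
      gcongr
      rwa [div_le_iff₀' (by positivity)]
    _ = √2 * C * ((x + 1) ^ δ / √(x + 1)) * √x := by ring

theorem deterministic_uniform_approximation_general
    (γ₀ : ℝ) (hγ0 : γ₀ ≠ 0)
    (k : ℕ → ℕ) (hk : Tendsto k atTop atTop)
    (r : ℕ → ℝ)
    (hrO : ∃ δ C : ℝ, 0 < δ ∧ δ < min (1/2) (γ₀ + 1/2) ∧
      ∀ n, |r n| ≤ C * (k n : ℝ) ^ δ) :
    ∀ ε > (0:ℝ), ∃ N : ℕ, ∀ n ≥ N,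
      ∀ s ∈ Set.Icc (1 / ((k n : ℝ) + 1)) ((k n : ℝ) / ((k n : ℝ) + 1)),
      ∀ h ∈ Metric.closedBall (0 : Fin 3 → ℝ) (r n),
        |(-Real.log s)⁻¹ *
          (1 + (γ₀ + h 0 / Real.sqrt (k n : ℝ)) *
            ((Qgev γ₀ s - h 1 / Real.sqrt (k n : ℝ)) /
              (1 + h 2 / Real.sqrt (k n : ℝ))))
            ^ (-1 / (γ₀ + h 0 / Real.sqrt (k n : ℝ))) - 1| ≤ ε := by
  intro ε hε
  obtain ⟨δ, C, hδ, hδγ, hC⟩ := hrO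
  obtain ⟨K, η, hK, hη, hbound⟩ := exists_abs_perturbed_gev_sub_one_le hγ0
  set C' := max C 0
  have hρ : Tendsto (fun n => √2 * C' * ((k n : ℝ) + 1) ^ (δ - 1 / 2) *
      (log ((k n : ℝ) + 1) + ((k n : ℝ) + 1) ^ (-γ₀) + log ((k n : ℝ) + 1) ^ γ₀ + 1))
      atTop (𝓝 0) := by
    have := ((tendsto_rpow_mul_log_add_rpow_add_log_rpow_add_one (p := δ - 1 / 2) (b := -γ₀) γ₀
      (by linarith [min_le_left (1 / 2) (γ₀ + 1 / 2)])
      (by linarith [min_le_right (1 / 2) (γ₀ + 1 / 2)])).comp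
      (tendsto_atTop_add_const_right _ 1 (tendsto_natCast_atTop_atTop.comp hk))).const_mul (√2 * C')
    simpa only [mul_assoc, mul_zero, Function.comp_def] using this
  obtain ⟨N, hN⟩ := eventually_atTop.1 ((hρ.eventually
    (ge_mem_nhds (lt_min hη (div_pos hε hK)))).and (hk.eventually_ge_atTop 1))
  refine ⟨N, fun n hn s hs h hh => ?_⟩
  obtain ⟨hρn, hkn⟩ := hN n hn
  set x : ℝ := (k n : ℝ)
  have hx : (1 : ℝ) ≤ x := Nat.one_le_cast.2 hkn
  have hcoord (i : Fin 3) : |h i / √x| ≤ √2 * C' * (x + 1) ^ (δ - 1 / 2) :=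
    abs_div_sqrt_le hx <| calc
      |h i| ≤ ‖h‖ := norm_le_pi_norm h i
      _ ≤ r n := mem_closedBall_zero_iff.1 hh
      _ ≤ C * x ^ δ := (le_abs_self _).trans (hC n)
      _ ≤ C' * (x + 1) ^ δ :=
        mul_le_mul (le_max_left C 0) (rpow_le_rpow (by positivity) (by linarith) hδ.le)
          (by positivity) (le_max_right C 0)
  have ht := neg_log_mem_Icc (by linarith) hs
  have hscale := mul_le_mul_of_nonneg_left (abs_log_add_rpow_add_one_le γ₀ (by linarith) ht)
    ((abs_nonneg _).trans (hcoord 0))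
  rw [Qgev, if_neg hγ0]
  refine (hbound _ _ _ _ _ ((inv_pos.2 (by linarith)).trans_le ht.1) (hcoord 0) (hcoord 1)
    (hcoord 2) (hscale.trans (hρn.trans (min_le_left _ _)))).trans ?_
  rw [← le_div_iff₀' hK]
  exact hscale.trans (hρn.trans (min_le_right _ _))

/-- **Deterministic uniform approximation at the true quantile function** (Lemma 2):
uniformly for `s ∈ [1/(k_n+1), k_n/(k_n+1)]` and `h ∈ H_n`,
`(-log s)⁻¹ (1 + (γ₀ + h₁/√k_n)(Q_{γ₀}(s) - h₂/√k_n)/(1 + h₃/√k_n))^{-1/(γ₀+h₁/√k_n)} = 1 + o(1)`. -/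
theorem deterministic_uniform_approximation
    (γ₀ : ℝ) (hγ : -(1/2) < γ₀) (hγ0 : γ₀ ≠ 0)
    (k : ℕ → ℕ) (hk : Tendsto k atTop atTop)
    (r : ℕ → ℝ) (hr : Tendsto r atTop atTop)
    (hrO : ∃ δ C : ℝ, 0 < δ ∧ δ < min (1/2) (γ₀ + 1/2) ∧
      ∀ n, |r n| ≤ C * (k n : ℝ) ^ δ) :
    ∀ ε > (0:ℝ), ∃ N : ℕ, ∀ n ≥ N,
      ∀ s ∈ Set.Icc (1 / ((k n : ℝ) + 1)) ((k n : ℝ) / ((k n : ℝ) + 1)),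
      ∀ h ∈ Metric.closedBall (0 : Fin 3 → ℝ) (r n),
        |(-Real.log s)⁻¹ *
          (1 + (γ₀ + h 0 / Real.sqrt (k n : ℝ)) *
            ((Qgev γ₀ s - h 1 / Real.sqrt (k n : ℝ)) /
              (1 + h 2 / Real.sqrt (k n : ℝ))))
            ^ (-1 / (γ₀ + h 0 / Real.sqrt (k n : ℝ))) - 1| ≤ ε :=
  deterministic_uniform_approximation_general γ₀ hγ0 k hk r hrO

end BMMLE
end
end

section
/- The GEV score is centered: for γ0 > −1/2, γ0 ≠ 0 and θ0 = (γ0, 0, 1), the vector-valued integral ∫_0^1 (∂ℓ/∂θ)(θ0, Q_{γ0}(s)) ds equals the zero vector in ℝ³; that is, each of the three partial derivatives of ℓ with respect to γ, μ and σ, evaluated at θ0 along the quantile curve s ↦ Q_{γ0}(s), is integrable on (0,1) and integrates to 0. -/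
open MeasureTheory ProbabilityTheory Filter Real Topology Matrix Set

noncomputable section

namespace BMMLE

/-! Substituting `s = e^{-t}` turns `Q_γ(s)` into `(t^{-γ} - 1)/γ` and `ds` on `(0,1)` into the
standard exponential law `e^{-t} dt` on `(0,∞)`. At these points every score component is a linear
combination of `t - 1`, `t^{γ+1} - (γ+1) t^γ` and `(t - 1) log t - 1`, and each of these has mean
zero under `e^{-t} dt`: the first two because `Γ(p + 2) = (p + 1) Γ(p + 1)` (with `p = 0` and
`p = γ > -1`), the last because `-(t log t + 1) e^{-t}` is an antiderivative of
`(t - 1) log t · e^{-t} ≥ 0` rising from `-1` to `0`. -/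

def gevLogDensity (γ z : ℝ) : ℝ := -(1 + 1 / γ) * log (1 + γ * z) - (1 + γ * z) ^ (-1 / γ)

lemma ll_eq_gevLogDensity {θ : Fin 3 → ℝ} (hθ : θ 0 ≠ 0) (x : ℝ) :
    ll θ x = gevLogDensity (θ 0) ((x - θ 1) / θ 2) - log (θ 2) := by
  simp [ll, hθ, gevLogDensity]

lemma score_one_θ₀ {γ x d : ℝ} (hγ : γ ≠ 0) (hd : HasDerivAt (gevLogDensity γ) d x) :
    score 1 (θ₀ γ) x = -d := by
  have hfun : (fun m => ll (Function.update (θ₀ γ) 1 m) x) = fun m => gevLogDensity γ (x - m) := by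
    funext m
    simp [ll_eq_gevLogDensity, θ₀, Function.update, hγ]
  have hshift : HasDerivAt (fun m : ℝ => x - m) (-1) 0 := by
    simpa using (hasDerivAt_id (0 : ℝ)).const_sub x
  have h : HasDerivAt (fun m => gevLogDensity γ (x - m)) (d * -1) 0 :=
    hd.comp_of_eq (0 : ℝ) hshift (by simp)
  rw [score, pd, hfun, show θ₀ γ 1 = 0 from rfl, h.deriv, mul_neg_one]

lemma score_two_θ₀ {γ x d : ℝ} (hγ : γ ≠ 0) (hd : HasDerivAt (gevLogDensity γ) d x) :
    score 2 (θ₀ γ) x = -x * d - 1 := by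
  have hfun : (fun m => ll (Function.update (θ₀ γ) 2 m) x)
      = fun m => gevLogDensity γ (x / m) - log m := by
    funext m
    simp [ll_eq_gevLogDensity, θ₀, Function.update, hγ]
  have hscale : HasDerivAt (fun m : ℝ => x / m) (-x) 1 := by
    simpa [div_eq_mul_inv] using (hasDerivAt_inv one_ne_zero).const_mul x
  have h : HasDerivAt (fun m => gevLogDensity γ (x / m) - log m) (d * -x - 1⁻¹) 1 :=
    (hd.comp_of_eq (1 : ℝ) hscale (by simp)).sub (hasDerivAt_log one_ne_zero)
  rw [score, pd, hfun, show θ₀ γ 2 = 1 from rfl, h.deriv]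
  ring

lemma score_zero_θ₀ {γ x d : ℝ} (hγ : γ ≠ 0) (hd : HasDerivAt (gevLogDensity · x) d γ) :
    score 0 (θ₀ γ) x = d := by
  have hfun : (fun m => ll (Function.update (θ₀ γ) 0 m) x) =ᶠ[𝓝 γ] (gevLogDensity · x) := by
    filter_upwards [eventually_ne_nhds hγ] with m hm
    simp [ll_eq_gevLogDensity, θ₀, Function.update, hm]
  rw [score, pd]
  exact hfun.deriv_eq.trans hd.deriv

section QuantilePoint

variable {γ t : ℝ}

lemma one_add_mul_quantile (hγ : γ ≠ 0) : 1 + γ * ((t ^ (-γ) - 1) / γ) = t ^ (-γ) := by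
  field_simp
  ring

lemma rpow_neg_rpow_neg_inv (hγ : γ ≠ 0) (ht : 0 < t) : (t ^ (-γ)) ^ (-1 / γ) = t := by
  rw [← rpow_mul ht.le, show -γ * (-1 / γ) = 1 by field_simp, rpow_one]

lemma rpow_neg_rpow_neg_inv_sub_one (hγ : γ ≠ 0) (ht : 0 < t) :
    (t ^ (-γ)) ^ (-1 / γ - 1) = t ^ (γ + 1) := by
  rw [← rpow_mul ht.le]
  congr 1
  field_simp
  ring

lemma hasDerivAt_gevLogDensity_quantile (hγ : γ ≠ 0) (ht : 0 < t) :
    HasDerivAt (gevLogDensity γ) (t ^ (γ + 1) - (γ + 1) * t ^ γ) ((t ^ (-γ) - 1) / γ) := by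
  have hu : HasDerivAt (fun z => 1 + γ * z) γ ((t ^ (-γ) - 1) / γ) := by
    simpa using ((hasDerivAt_id _).const_mul γ).const_add 1
  have hpos : 0 < 1 + γ * ((t ^ (-γ) - 1) / γ) := by
    rw [one_add_mul_quantile hγ]; positivity
  have h : HasDerivAt (gevLogDensity γ) _ _ :=
    ((hu.log hpos.ne').const_mul (-(1 + 1 / γ))).sub (hu.rpow_const (p := -1 / γ) (Or.inl hpos.ne'))
  refine h.congr_deriv ?_
  rw [one_add_mul_quantile hγ, rpow_neg_rpow_neg_inv_sub_one hγ ht, rpow_neg ht.le]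
  field_simp
  ring

lemma hasDerivAt_gevLogDensity_shape_quantile (hγ : γ ≠ 0) (ht : 0 < t) :
    HasDerivAt (gevLogDensity · ((t ^ (-γ) - 1) / γ))
      (((t - 1) * log t - 1) / γ + ((t - 1) - (t ^ (γ + 1) - (γ + 1) * t ^ γ)) / γ ^ 2) γ := by
  set x := (t ^ (-γ) - 1) / γ
  have hu : HasDerivAt (fun g => 1 + g * x) x γ := by
    simpa using ((hasDerivAt_id γ).mul_const x).const_add 1
  have hpos : 0 < 1 + γ * x := by
    rw [one_add_mul_quantile hγ]; positivity
  have hexp : HasDerivAt (fun g : ℝ => -1 / g) ((0 * γ - -1 * 1) / γ ^ 2) γ :=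
    (hasDerivAt_const γ (-1 : ℝ)).div (hasDerivAt_id' γ) hγ
  have hcoef : HasDerivAt (fun g : ℝ => -(1 + 1 / g)) (-((0 * γ - 1 * 1) / γ ^ 2)) γ :=
    (((hasDerivAt_const γ (1 : ℝ)).div (hasDerivAt_id' γ) hγ).const_add 1).neg
  have h : HasDerivAt (gevLogDensity · x) _ γ :=
    (hcoef.mul (hu.log hpos.ne')).sub (hu.rpow hexp hpos)
  refine h.congr_deriv ?_
  rw [one_add_mul_quantile hγ, rpow_neg_rpow_neg_inv_sub_one hγ ht, rpow_neg_rpow_neg_inv hγ ht,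
    log_rpow ht, rpow_neg ht.le, rpow_add ht, rpow_one]
  simp only [x, rpow_neg ht.le]
  field_simp
  ring

end QuantilePoint

def expCenteredComb (γ a b c t : ℝ) : ℝ :=
  a * (t - 1) + b * (t ^ (γ + 1) - (γ + 1) * t ^ γ) + c * ((t - 1) * log t - 1)

lemma exists_score_θ₀_quantile_eq_expCenteredComb {γ : ℝ} (hγ : γ ≠ 0) (i : Fin 3) :
    ∃ a b c : ℝ, ∀ t > 0, score i (θ₀ γ) ((t ^ (-γ) - 1) / γ) = expCenteredComb γ a b c t := by
  fin_cases i
  · refine ⟨(γ ^ 2)⁻¹, -(γ ^ 2)⁻¹, γ⁻¹, fun t ht => ?_⟩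
    refine (score_zero_θ₀ hγ (hasDerivAt_gevLogDensity_shape_quantile hγ ht)).trans ?_
    rw [expCenteredComb]
    ring
  · refine ⟨0, -1, 0, fun t ht => ?_⟩
    refine (score_one_θ₀ hγ (hasDerivAt_gevLogDensity_quantile hγ ht)).trans ?_
    rw [expCenteredComb]
    ring
  · refine ⟨-γ⁻¹, γ⁻¹, 0, fun t ht => ?_⟩
    refine (score_two_θ₀ hγ (hasDerivAt_gevLogDensity_quantile hγ ht)).trans ?_
    rw [expCenteredComb, rpow_add ht, rpow_one, rpow_neg ht.le]
    field_simp
    ring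

section ExpIntegrals

variable {p : ℝ}

lemma integrableOn_exp_neg_mul_rpow (hp : -1 < p) :
    IntegrableOn (fun t => exp (-t) * t ^ p) (Ioi 0) := by
  simpa using GammaIntegral_convergent (s := p + 1) (by linarith)

lemma integral_exp_neg_mul_rpow (hp : -1 < p) :
    ∫ t in Ioi 0, exp (-t) * t ^ p = Gamma (p + 1) := by
  rw [Gamma_eq_integral (by linarith)]
  simp

lemma integrableOn_exp_neg_mul_rpow_add_one_sub (hp : -1 < p) :
    IntegrableOn (fun t => exp (-t) * (t ^ (p + 1) - (p + 1) * t ^ p)) (Ioi 0) := by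
  refine ((integrableOn_exp_neg_mul_rpow (by linarith : -1 < p + 1)).sub
    ((integrableOn_exp_neg_mul_rpow hp).const_mul (p + 1))).congr_fun (fun t _ => ?_)
    measurableSet_Ioi
  simp only [Pi.sub_apply]
  ring

lemma integral_exp_neg_mul_rpow_add_one_sub (hp : -1 < p) :
    ∫ t in Ioi 0, exp (-t) * (t ^ (p + 1) - (p + 1) * t ^ p) = 0 := by
  have hsplit : ∀ t, exp (-t) * (t ^ (p + 1) - (p + 1) * t ^ p)
      = exp (-t) * t ^ (p + 1) - (p + 1) * (exp (-t) * t ^ p) := fun t => by ring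
  simp_rw [hsplit]
  rw [integral_sub (integrableOn_exp_neg_mul_rpow (by linarith))
      ((integrableOn_exp_neg_mul_rpow hp).const_mul _), integral_const_mul,
    integral_exp_neg_mul_rpow (by linarith), integral_exp_neg_mul_rpow hp,
    Gamma_add_one (by linarith), sub_self]

lemma tendsto_mul_log_mul_exp_neg_atTop :
    Tendsto (fun t => t * log t * exp (-t)) atTop (𝓝 0) := by
  refine tendsto_of_tendsto_of_tendsto_of_le_of_le' tendsto_const_nhds
    (tendsto_pow_mul_exp_neg_atTop_nhds_zero 2) ?_ ?_
  · filter_upwards [eventually_ge_atTop 1] with t ht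
    have := log_nonneg ht
    positivity
  · filter_upwards [eventually_ge_atTop 1] with t ht
    have hlog : log t ≤ t := (log_le_sub_one_of_pos (by linarith)).trans (by linarith)
    have := log_nonneg ht
    rw [sq]
    gcongr

lemma hasDerivAt_neg_mul_log_add_one_mul_exp_neg {t : ℝ} (ht : 0 < t) :
    HasDerivAt (fun t => -(t * log t + 1) * exp (-t)) (exp (-t) * ((t - 1) * log t)) t := by
  have h : HasDerivAt (fun t => -(t * log t + 1) * exp (-t)) _ t :=
    ((((hasDerivAt_id' t).mul (hasDerivAt_log ht.ne')).add_const 1).neg).mul (hasDerivAt_neg t).exp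
  refine h.congr_deriv ?_
  simp only [Pi.neg_apply, Pi.mul_apply]
  field_simp
  ring

lemma continuousWithinAt_neg_mul_log_add_one_mul_exp_neg :
    ContinuousWithinAt (fun t => -(t * log t + 1) * exp (-t)) (Ici 0) 0 :=
  (((continuous_mul_log.add continuous_const).neg).mul
    (continuous_exp.comp continuous_neg)).continuousWithinAt

lemma tendsto_neg_mul_log_add_one_mul_exp_neg_atTop :
    Tendsto (fun t => -(t * log t + 1) * exp (-t)) atTop (𝓝 0) := by
  have h := (tendsto_mul_log_mul_exp_neg_atTop.add tendsto_exp_neg_atTop_nhds_zero).neg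
  simp only [add_zero, neg_zero] at h
  refine h.congr fun t => ?_
  ring

lemma exp_neg_mul_sub_one_mul_log_nonneg {t : ℝ} (ht : 0 < t) :
    0 ≤ exp (-t) * ((t - 1) * log t) := by
  rcases le_total 1 t with h | h
  · have := log_nonneg h
    have : 0 ≤ t - 1 := by linarith
    positivity
  · exact mul_nonneg (exp_pos _).le
      (mul_nonneg_of_nonpos_of_nonpos (by linarith) (log_nonpos ht.le h))

lemma integrableOn_exp_neg_mul_sub_one_mul_log :
    IntegrableOn (fun t => exp (-t) * ((t - 1) * log t)) (Ioi 0) :=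
  integrableOn_Ioi_deriv_of_nonneg continuousWithinAt_neg_mul_log_add_one_mul_exp_neg
    (fun _ ht => hasDerivAt_neg_mul_log_add_one_mul_exp_neg ht)
    (fun _ ht => exp_neg_mul_sub_one_mul_log_nonneg ht)
    tendsto_neg_mul_log_add_one_mul_exp_neg_atTop

lemma integral_exp_neg_mul_sub_one_mul_log :
    ∫ t in Ioi 0, exp (-t) * ((t - 1) * log t) = 1 := by
  rw [integral_Ioi_of_hasDerivAt_of_nonneg continuousWithinAt_neg_mul_log_add_one_mul_exp_neg
    (fun _ ht => hasDerivAt_neg_mul_log_add_one_mul_exp_neg ht)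
    (fun _ ht => exp_neg_mul_sub_one_mul_log_nonneg ht)
    tendsto_neg_mul_log_add_one_mul_exp_neg_atTop]
  simp

end ExpIntegrals

section CenteredComb

variable {γ : ℝ}

lemma exp_neg_mul_expCenteredComb (γ a b c t : ℝ) :
    exp (-t) * expCenteredComb γ a b c t
      = a * (exp (-t) * (t - 1)) + b * (exp (-t) * (t ^ (γ + 1) - (γ + 1) * t ^ γ))
        + c * (exp (-t) * ((t - 1) * log t) - exp (-t)) := by
  rw [expCenteredComb]
  ring

lemma integrableOn_exp_neg_mul_sub_one :
    IntegrableOn (fun t => exp (-t) * (t - 1)) (Ioi 0) := by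
  simpa using integrableOn_exp_neg_mul_rpow_add_one_sub (p := 0) (by norm_num)

lemma integral_exp_neg_mul_sub_one : ∫ t in Ioi 0, exp (-t) * (t - 1) = 0 := by
  simpa using integral_exp_neg_mul_rpow_add_one_sub (p := 0) (by norm_num)

lemma integrableOn_exp_neg_mul_expCenteredComb (hγ : -1 < γ) (a b c : ℝ) :
    IntegrableOn (fun t => exp (-t) * expCenteredComb γ a b c t) (Ioi 0) := by
  simp_rw [exp_neg_mul_expCenteredComb]
  exact ((integrableOn_exp_neg_mul_sub_one.const_mul a).add
    ((integrableOn_exp_neg_mul_rpow_add_one_sub hγ).const_mul b)).add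
    ((integrableOn_exp_neg_mul_sub_one_mul_log.sub (integrableOn_exp_neg_Ioi 0)).const_mul c)

lemma integral_exp_neg_mul_expCenteredComb (hγ : -1 < γ) (a b c : ℝ) :
    ∫ t in Ioi 0, exp (-t) * expCenteredComb γ a b c t = 0 := by
  have hA := integrableOn_exp_neg_mul_sub_one.const_mul a
  have hB := (integrableOn_exp_neg_mul_rpow_add_one_sub hγ).const_mul b
  have hAB : IntegrableOn (fun t => a * (exp (-t) * (t - 1))
      + b * (exp (-t) * (t ^ (γ + 1) - (γ + 1) * t ^ γ))) (Ioi 0) := hA.add hB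
  have hC : IntegrableOn (fun t => exp (-t) * ((t - 1) * log t) - exp (-t)) (Ioi 0) :=
    integrableOn_exp_neg_mul_sub_one_mul_log.sub (integrableOn_exp_neg_Ioi 0)
  simp_rw [exp_neg_mul_expCenteredComb]
  rw [integral_add hAB (hC.const_mul c), integral_add hA hB, integral_const_mul,
    integral_const_mul, integral_const_mul, integral_sub integrableOn_exp_neg_mul_sub_one_mul_log
      (integrableOn_exp_neg_Ioi 0),
    integral_exp_neg_mul_sub_one, integral_exp_neg_mul_rpow_add_one_sub hγ,
    integral_exp_neg_mul_sub_one_mul_log, integral_exp_neg_Ioi_zero]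
  ring

end CenteredComb

section NegLogSubstitution

lemma image_exp_neg_Ioi_zero : (fun t => exp (-t)) '' Ioi 0 = Ioo (0 : ℝ) 1 := by
  ext s
  constructor
  · rintro ⟨t, ht, rfl⟩
    exact ⟨exp_pos _, exp_lt_one_iff.mpr (neg_neg_iff_pos.mpr ht)⟩
  · rintro ⟨hs0, hs1⟩
    exact ⟨-log s, neg_pos.mpr (log_neg hs0 hs1), by simp [exp_log hs0]⟩

lemma hasDerivWithinAt_exp_neg (t : ℝ) :
    HasDerivWithinAt (fun t => exp (-t)) (-exp (-t)) (Ioi 0) t := by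
  simpa using (hasDerivAt_neg t).exp.hasDerivWithinAt

lemma injOn_exp_neg : InjOn (fun t => exp (-t)) (Ioi 0) :=
  fun _ _ _ _ h => neg_injective (exp_injective h)

variable {E : Type*} [NormedAddCommGroup E] [NormedSpace ℝ E]

lemma integrableOn_Ioo_comp_neg_log_iff (f : ℝ → E) :
    IntegrableOn (fun s => f (-log s)) (Ioo 0 1) ↔
      IntegrableOn (fun t => exp (-t) • f t) (Ioi 0) := by
  rw [← image_exp_neg_Ioi_zero, integrableOn_image_iff_integrableOn_abs_deriv_smul
    measurableSet_Ioi (fun t _ => hasDerivWithinAt_exp_neg t) injOn_exp_neg]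
  simp [abs_of_pos (exp_pos _)]

lemma integral_Ioo_comp_neg_log (f : ℝ → E) :
    ∫ s in Ioo 0 1, f (-log s) = ∫ t in Ioi 0, exp (-t) • f t := by
  rw [← image_exp_neg_Ioi_zero, integral_image_eq_integral_abs_deriv_smul
    measurableSet_Ioi (fun t _ => hasDerivWithinAt_exp_neg t) injOn_exp_neg]
  simp [abs_of_pos (exp_pos _)]

end NegLogSubstitution

/-- **The GEV score is centered** (eq. (31), first part): for `γ₀ > -1/2`, `γ₀ ≠ 0`,
each component of the score, evaluated at `θ₀ = (γ₀,0,1)` along the quantile curve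
`s ↦ Q_{γ₀}(s)`, is integrable on `(0,1)` and integrates to `0`. -/
theorem gev_score_centered (γ₀ : ℝ) (hγ : -(1/2) < γ₀) (hγ0 : γ₀ ≠ 0) :
    ∀ i : Fin 3,
      IntegrableOn (fun s => score i (θ₀ γ₀) (Qgev γ₀ s)) (Set.Ioo (0:ℝ) 1) volume ∧
      ∫ s in Set.Ioo (0:ℝ) 1, score i (θ₀ γ₀) (Qgev γ₀ s) = 0 := by
  intro i
  obtain ⟨a, b, c, hscore⟩ := exists_score_θ₀_quantile_eq_expCenteredComb hγ0 i
  have hQ : EqOn (fun s => score i (θ₀ γ₀) (Qgev γ₀ s))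
      (fun s => expCenteredComb γ₀ a b c (-log s)) (Ioo 0 1) := fun s hs => by
    simp only [Qgev, hγ0, if_false]
    exact hscore _ (neg_pos.mpr (log_neg hs.1 hs.2))
  have hγ1 : -1 < γ₀ := by linarith
  refine ⟨((integrableOn_Ioo_comp_neg_log_iff _).mpr ?_).congr_fun hQ.symm measurableSet_Ioo, ?_⟩
  · exact integrableOn_exp_neg_mul_expCenteredComb hγ1 a b c
  · rw [setIntegral_congr_fun measurableSet_Ioo hQ, integral_Ioo_comp_neg_log]
    exact integral_exp_neg_mul_expCenteredComb hγ1 a b c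

end BMMLE
end
end

section
/- Derivative of the GEV transform in the shape parameter: for every γ ≠ 0 and x ∈ ℝ with 1 + γx > 0, the function γ ↦ (1+γx)^{−1/γ} is differentiable at γ and its derivative equals z·(log z)²·h(γ·log z), where z = (1+γx)^{−1/γ} and h(y) = (e^y − 1 − y)/y² for y ≠ 0, h(0) = 1/2. -/
open MeasureTheory ProbabilityTheory Filter Real Topology Matrix Set

noncomputable section

namespace BMMLE

/-- The auxiliary function `h(x) = (eˣ - 1 - x)/x²`, `h(0) = 1/2`. -/
def hAux (x : ℝ) : ℝ := if x = 0 then 1/2 else (Real.exp x - 1 - x) / x ^ 2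

/-! With `u(g) = -log (1 + g x) / g` the transform is `exp ∘ u`, so its derivative is `z · u'(γ)`,
and a direct computation gives `u'(γ) = (e^{γu} - 1 - γu) / γ²`, which is `u² h(γu)`. -/

theorem sq_mul_hAux_mul {γ : ℝ} (hγ : γ ≠ 0) (u : ℝ) :
    u ^ 2 * hAux (γ * u) = (Real.exp (γ * u) - 1 - γ * u) / γ ^ 2 := by
  by_cases hu : u = 0
  · simp [hu]
  · rw [hAux, if_neg (mul_ne_zero hγ hu)]
    field_simp

theorem hasDerivAt_neg_log_one_add_mul_div {γ x : ℝ} (hγ : γ ≠ 0) (hx : 0 < 1 + γ * x) :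
    HasDerivAt (fun g : ℝ => -Real.log (1 + g * x) / g)
      (((1 + γ * x)⁻¹ - 1 + Real.log (1 + γ * x)) / γ ^ 2) γ := by
  have hlin : HasDerivAt (fun g : ℝ => 1 + g * x) x γ := by
    simpa using ((hasDerivAt_id γ).mul_const x).const_add 1
  refine ((hlin.log hx.ne').neg.div (hasDerivAt_id' γ) hγ).congr_deriv ?_
  have hinv : (1 + γ * x)⁻¹ - 1 = -(x / (1 + γ * x)) * γ := by
    field_simp [hx.ne']
    ring
  simp only [Pi.neg_apply, hinv]
  ring

theorem rpow_neg_one_div_eventuallyEq_exp {γ x : ℝ} (hx : 0 < 1 + γ * x) :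
    (fun g : ℝ => (1 + g * x) ^ (-1 / g)) =ᶠ[𝓝 γ]
      fun g => Real.exp (-Real.log (1 + g * x) / g) := by
  have hpos : ∀ᶠ g in 𝓝 γ, 0 < 1 + g * x :=
    (continuous_const.add (continuous_id.mul continuous_const)).continuousAt.eventually
      (eventually_gt_nhds hx)
  filter_upwards [hpos] with g hg
  rw [Real.rpow_def_of_pos hg]
  ring_nf

/-- **Derivative of the GEV transform in the shape parameter**: for `γ ≠ 0` and
`1 + γx > 0`, the map `γ ↦ (1+γx)^{-1/γ}` is differentiable at `γ` with derivative
`z (log z)² h(γ log z)` where `z = (1+γx)^{-1/γ}`. -/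
theorem gev_transform_deriv_shape (γ x : ℝ) (hγ : γ ≠ 0) (hx : 0 < 1 + γ * x) :
    HasDerivAt (fun g : ℝ => (1 + g * x) ^ (-1 / g))
      ((1 + γ * x) ^ (-1 / γ) * (Real.log ((1 + γ * x) ^ (-1 / γ))) ^ 2 *
        hAux (γ * Real.log ((1 + γ * x) ^ (-1 / γ)))) γ := by
  set L := Real.log (1 + γ * x)
  have hlog : Real.log ((1 + γ * x) ^ (-1 / γ)) = -L / γ := by
    rw [Real.log_rpow hx]
    ring
  have hexp : Real.exp (γ * (-L / γ)) = (1 + γ * x)⁻¹ := by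
    rw [mul_div_cancel₀ _ hγ, Real.exp_neg, Real.exp_log hx]
  refine ((hasDerivAt_neg_log_one_add_mul_div hγ hx).exp.congr_of_eventuallyEq
    (rpow_neg_one_div_eventuallyEq_exp hx)).congr_deriv ?_
  rw [hlog, mul_assoc, sq_mul_hAux_mul hγ, hexp, mul_div_cancel₀ _ hγ,
    (rpow_neg_one_div_eventuallyEq_exp hx).eq_of_nhds]
  ring

end BMMLE
end
end

section
/- Bounds on the derivatives of z(γ,x) = (1+γx)^{−1/γ}: for every γ0 ∈ ℝ and ε > 0 there exist C > 0 and δ > 0 such that for all γ ∈ (γ0−δ, γ0+δ), γ ≠ 0, and all x with 1 + γx > 0, writing z = z(γ,x): (i) for the first-order partial derivatives, |∂z/∂x^i ∂γ^{1−i}| ≤ C·max(z^{1+iγ0−ε}, z^{1+iγ0+ε}, z^{1+γ0−ε}, z^{1+γ0+ε}) for i = 0,1; (ii) for the second-order partial derivatives, |∂²z/∂x^i ∂γ^{2−i}| ≤ C·max(z^{1+iγ0−ε}, z^{1+iγ0+ε}, z^{1+2γ0−ε}, z^{1+2γ0+ε}) for i = 0,1,2; (iii) for the third-order partial derivatives,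 |∂³z/∂x^i ∂γ^{3−i}| ≤ C·max(z^{1+iγ0−ε}, z^{1+iγ0+ε}, z^{1+3γ0−ε}, z^{1+3γ0+ε}) for i = 0,1,2,3. -/
open MeasureTheory ProbabilityTheory Filter Real Topology Matrix Set

noncomputable section

namespace BMMLE

/-- `z(γ, x) = (1 + γ x)^{-1/γ}`. -/
def zfun (γ x : ℝ) : ℝ := (1 + γ * x) ^ (-1 / γ)

/-- Iterated mixed partial derivatives of a function of `(γ, x)`: `true` entries
differentiate in `x`, `false` entries differentiate in `γ`. -/
def mixedDeriv : List Bool → (ℝ → ℝ → ℝ) → ℝ → ℝ → ℝ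
  | [], f => f
  | true :: L, f => fun γ x => deriv (fun x' => mixedDeriv L f γ x') x
  | false :: L, f => fun γ x => deriv (fun γ' => mixedDeriv L f γ' x) γ

/-! Write `v = log z = -log (1 + γx) / γ` and `s = γ v`, so that `(1 + γx)⁻¹ = eˢ`. Every partial
derivative of `z` of order `n ≤ 3` with `i` derivatives in `x` is `z (1 + γx)⁻ⁱ` times a polynomial
in `γ` and the quotients `Rₖ(j s) / γᵏ`, where `Rₖ` is the remainder of order `k` of the Taylor
series of `exp`. Since `|Rₖ(t)| ≤ |t|ᵏ max(1, eᵗ)`, these quotients are at most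
`jᵏ |v|ᵏ max(1, e^{γv})ʲ` uniformly in `γ`, so the apparent singularity at `γ = 0` disappears, and
the derivative is `O((1 + |v|)⁶ max(z^{1+iγ}, z^{1+nγ}))`. Finally `(1 + |v|)⁶ = O(e^{ε|v|/2})`,
and the other half of `e^{ε|v|}` pays for replacing `γ` by `γ₀` in the exponents once
`|γ - γ₀| < ε / 6`. -/

def expRem (k : ℕ) (t : ℝ) : ℝ := exp t - ∑ m ∈ Finset.range k, t ^ m / m.factorial

lemma expRem_zero (t : ℝ) : expRem 0 t = exp t := by simp [expRem]

lemma expRem_succ_zero (k : ℕ) : expRem (k + 1) 0 = 0 := by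
  simp [expRem, Finset.sum_range_succ']

lemma continuous_expRem (k : ℕ) : Continuous (expRem k) := by
  unfold expRem; fun_prop

lemma hasDerivAt_expRem (k : ℕ) (t : ℝ) : HasDerivAt (expRem (k + 1)) (expRem k t) t := by
  have hsum : HasDerivAt (fun t' => ∑ m ∈ Finset.range (k + 1), t' ^ m / (m.factorial : ℝ))
      (∑ m ∈ Finset.range (k + 1), (m * t ^ (m - 1)) / (m.factorial : ℝ)) t :=
    HasDerivAt.fun_sum fun m _ => (hasDerivAt_pow m t).div_const _
  refine ((hasDerivAt_exp t).sub hsum).congr_deriv ?_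
  rw [expRem, Finset.sum_range_succ']
  simp only [CharP.cast_eq_zero, zero_mul, zero_div, add_zero, Nat.add_sub_cancel]
  congr 1
  refine Finset.sum_congr rfl fun m _ => ?_
  rw [Nat.factorial_succ]
  push_cast
  field_simp

lemma abs_expRem_le (k : ℕ) (t : ℝ) : |expRem k t| ≤ |t| ^ k * max 1 (exp t) := by
  induction k generalizing t with
  | zero => simp [expRem_zero, abs_of_pos (exp_pos t)]
  | succ k ih =>
    have hint : expRem (k + 1) t = ∫ s in (0:ℝ)..t, expRem k s := by
      rw [intervalIntegral.integral_eq_sub_of_hasDerivAt (fun s _ => hasDerivAt_expRem k s)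
        ((continuous_expRem k).intervalIntegrable 0 t), expRem_succ_zero, sub_zero]
    have hbound : ∀ s ∈ Set.uIoc (0:ℝ) t, ‖expRem k s‖ ≤ |t| ^ k * max 1 (exp t) := by
      intro s hs
      have hst : |s| ≤ |t| ∧ max 1 (exp s) ≤ max 1 (exp t) := by
        rcases Set.mem_uIoc.mp hs with h | h
        · exact ⟨abs_le_abs_of_nonneg h.1.le h.2, max_le_max le_rfl (exp_le_exp.mpr h.2)⟩
        · refine ⟨abs_le_abs_of_nonpos h.2 h.1.le, ?_⟩
          rw [max_eq_left (exp_le_one_iff.mpr h.2)]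
          exact le_max_left _ _
      calc ‖expRem k s‖ ≤ |s| ^ k * max 1 (exp s) := ih s
        _ ≤ |t| ^ k * max 1 (exp t) :=
          mul_le_mul (pow_le_pow_left₀ (abs_nonneg s) hst.1 k) hst.2 (by positivity) (by positivity)
    calc |expRem (k + 1) t| ≤ |t| ^ k * max 1 (exp t) * |t - 0| := by
          rw [hint]; exact intervalIntegral.norm_integral_le_of_norm_le_const hbound
      _ = |t| ^ (k + 1) * max 1 (exp t) := by rw [sub_zero]; ring

lemma exp_mul_max_one_pow (a b : ℝ) (m : ℕ) :
    exp a * max 1 (exp b) ^ m = max (exp a) (exp (a + m * b)) := by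
  rw [← exp_zero, ← exp_monotone.map_max, ← exp_nat_mul, ← exp_add, ← exp_monotone.map_max,
    mul_max_of_nonneg _ _ (Nat.cast_nonneg m), mul_zero, ← max_add_add_left, add_zero]

lemma one_add_le_mul_exp {η t : ℝ} (hη : 0 < η) (ht : 0 ≤ t) :
    1 + t ≤ (1 + η⁻¹) * exp (η * t) := by
  calc 1 + t ≤ (1 + η⁻¹) * (η * t + 1) := by
        field_simp
        nlinarith [mul_nonneg hη.le ht]
    _ ≤ (1 + η⁻¹) * exp (η * t) := mul_le_mul_of_nonneg_left (add_one_le_exp _) (by positivity)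

lemma exp_mul_mul_exp_le_max {a b ε : ℝ} (hab : |a - b| ≤ ε / 2) (v : ℝ) :
    exp (a * v) * exp (ε / 2 * |v|) ≤ max (exp ((b - ε) * v)) (exp ((b + ε) * v)) := by
  rw [← exp_add, ← exp_monotone.map_max, exp_le_exp]
  have h : (a - b) * v ≤ ε / 2 * |v| :=
    (le_abs_self _).trans (by rw [abs_mul]; exact mul_le_mul_of_nonneg_right hab (abs_nonneg v))
  rcases le_total 0 v with hv | hv
  · rw [abs_of_nonneg hv] at h ⊢
    exact le_max_of_le_right (by nlinarith)
  · rw [abs_of_nonpos hv] at h ⊢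
    exact le_max_of_le_left (by nlinarith)

def MonomialBound (v P c : ℝ) (a b : ℕ) (t : ℝ) : Prop :=
  |t| ≤ c * (1 + |v|) ^ a * max 1 P ^ b

namespace MonomialBound

variable {v P c c' : ℝ} {a a' b b' : ℕ} {t t' : ℝ}

lemma one_le_weight (a b : ℕ) : 1 ≤ (1 + |v|) ^ a * max 1 P ^ b :=
  one_le_mul_of_one_le_of_one_le (one_le_pow₀ (le_add_of_nonneg_right (abs_nonneg v)))
    (one_le_pow₀ (le_max_left _ _))

lemma weight_mono (ha : a ≤ a') (hb : b ≤ b') :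
    (1 + |v|) ^ a * max 1 P ^ b ≤ (1 + |v|) ^ a' * max 1 P ^ b' :=
  mul_le_mul (pow_le_pow_right₀ (le_add_of_nonneg_right (abs_nonneg v)) ha)
    (pow_le_pow_right₀ (le_max_left _ _) hb) (by positivity) (by positivity)

lemma nonneg (h : MonomialBound v P c a b t) : 0 ≤ c := by
  have hw := one_le_weight (v := v) (P := P) a b
  unfold MonomialBound at h
  rw [mul_assoc] at h
  exact nonneg_of_mul_nonneg_left ((abs_nonneg t).trans h) (by linarith)

lemma mono (h : MonomialBound v P c a b t) (ha : a ≤ a') (hb : b ≤ b') (hc : c ≤ c') :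
    MonomialBound v P c' a' b' t := by
  have hc₀ := h.nonneg
  unfold MonomialBound at *
  rw [mul_assoc] at h ⊢
  exact h.trans (mul_le_mul hc (weight_mono ha hb) (by positivity) (hc₀.trans hc))

lemma of_abs_le (h : |t| ≤ c) : MonomialBound v P c 0 0 t := by
  simpa [MonomialBound] using h

lemma add (h : MonomialBound v P c a b t) (h' : MonomialBound v P c' a' b' t') :
    MonomialBound v P (c + c') (max a a') (max b b') (t + t') := by
  have h₁ := h.mono (le_max_left a a') (le_max_left b b') le_rfl
  have h₂ := h'.mono (le_max_right a a') (le_max_right b b') le_rfl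
  unfold MonomialBound at *
  calc |t + t'| ≤ |t| + |t'| := abs_add_le t t'
    _ ≤ _ := by linarith

lemma neg (h : MonomialBound v P c a b t) : MonomialBound v P c a b (-t) := by
  rwa [MonomialBound, abs_neg]

lemma sub (h : MonomialBound v P c a b t) (h' : MonomialBound v P c' a' b' t') :
    MonomialBound v P (c + c') (max a a') (max b b') (t - t') := by
  simpa only [sub_eq_add_neg] using h.add h'.neg

lemma mul (h : MonomialBound v P c a b t) (h' : MonomialBound v P c' a' b' t') :
    MonomialBound v P (c * c') (a + a') (b + b') (t * t') := by
  unfold MonomialBound at *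
  rw [abs_mul]
  calc |t| * |t'| ≤ (c * (1 + |v|) ^ a * max 1 P ^ b) * (c' * (1 + |v|) ^ a' * max 1 P ^ b') :=
        mul_le_mul h h' (abs_nonneg _) ((abs_nonneg _).trans h)
    _ = _ := by ring

lemma pow (h : MonomialBound v P c a b t) (n : ℕ) :
    MonomialBound v P (c ^ n) (a * n) (b * n) (t ^ n) := by
  unfold MonomialBound at *
  rw [abs_pow]
  calc |t| ^ n ≤ (c * (1 + |v|) ^ a * max 1 P ^ b) ^ n := pow_le_pow_left₀ (abs_nonneg _) h n
    _ = _ := by ring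

lemma const_mul (h : MonomialBound v P c a b t) (r : ℝ) :
    MonomialBound v P (|r| * c) a b (r * t) := by
  simpa [MonomialBound, abs_mul, mul_assoc] using mul_le_mul_of_nonneg_left h (abs_nonneg r)

end MonomialBound

/-- With `D k j = Rₖ(j s) / γᵏ`, `partialPoly D γ i n` is `∂ⁿz/∂xⁱ∂γⁿ⁻ⁱ` divided by
`z (1 + γx)⁻ⁱ`; outside `i ≤ n ≤ 3` it is a junk `0`. -/
def partialPoly (D : ℕ → ℕ → ℝ) (γ : ℝ) : ℕ → ℕ → ℝ
  | 0, 0 => 1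
  | 0, 1 => D 2 1
  | 1, 1 => -1
  | 0, 2 => D 2 1 ^ 2 + D 3 2 - 4 * D 3 1
  | 1, 2 => -(D 1 1 + D 2 1)
  | 2, 2 => 1 + γ
  | 0, 3 => D 2 1 ^ 3 + 3 * D 2 1 * (D 3 2 - 4 * D 3 1) + 2 * D 4 3 - 9 * D 4 2 + 18 * D 4 1
  | 1, 3 => -D 2 1 ^ 2 - D 3 2 + 4 * D 3 1 - 2 * D 1 1 * D 2 1 - 2 * D 2 2 + 4 * D 2 1
  | 2, 3 => (1 + γ) * D 2 1 + 2 * (1 + γ) * D 1 1 + 1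
  | 3, 3 => -((1 + γ) * (1 + 2 * γ))
  | _, _ => 0

lemma monomialBound_partialPoly {v P : ℝ} {D : ℕ → ℕ → ℝ}
    (hD : ∀ k j : ℕ, MonomialBound v P ((j : ℝ) ^ k) k j (D k j)) (γ : ℝ) {i n : ℕ} (hin : i ≤ n)
    (hn : n ≤ 3) : MonomialBound v P (400 * (1 + |γ|) ^ 2) 6 (n - i) (partialPoly D γ i n) := by
  have hconst (r : ℝ) : MonomialBound v P |r| 0 0 r := .of_abs_le le_rfl
  have hγ₁ : MonomialBound v P (1 + |γ|) 0 0 (1 + γ) :=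
    .of_abs_le ((abs_add_le 1 γ).trans (by simp))
  have hγ₂ : MonomialBound v P (1 + 2 * |γ|) 0 0 (1 + 2 * γ) :=
    .of_abs_le ((abs_add_le 1 (2 * γ)).trans (by simp [abs_mul]))
  interval_cases n <;> interval_cases i
  on_goal 1 => refine (hconst 1).mono (by norm_num) (by norm_num) ?_
  on_goal 2 => refine (hD 2 1).mono (by norm_num) (by norm_num) ?_
  on_goal 3 => refine (hconst 1).neg.mono (by norm_num) (by norm_num) ?_
  on_goal 4 =>
    refine ((((hD 2 1).pow 2).add (hD 3 2)).sub ((hD 3 1).const_mul 4)).mono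
      (by norm_num) (by norm_num) ?_
  on_goal 5 => refine ((hD 1 1).add (hD 2 1)).neg.mono (by norm_num) (by norm_num) ?_
  on_goal 6 => refine hγ₁.mono (by norm_num) (by norm_num) ?_
  on_goal 7 =>
    refine ((((((hD 2 1).pow 3).add (((hD 2 1).const_mul 3).mul ((hD 3 2).sub
      ((hD 3 1).const_mul 4)))).add ((hD 4 3).const_mul 2)).sub ((hD 4 2).const_mul 9)).add
      ((hD 4 1).const_mul 18)).mono (by norm_num) (by norm_num) ?_
  on_goal 8 =>
    refine (((((((hD 2 1).pow 2).neg.sub (hD 3 2)).add ((hD 3 1).const_mul 4)).sub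
      (((hD 1 1).const_mul 2).mul (hD 2 1))).sub ((hD 2 2).const_mul 2)).add
      ((hD 2 1).const_mul 4)).mono (by norm_num) (by norm_num) ?_
  on_goal 9 =>
    refine (((hγ₁.mul (hD 2 1)).add ((hγ₁.const_mul 2).mul (hD 1 1))).add (hconst 1)).mono
      (by norm_num) (by norm_num) ?_
  on_goal 10 => refine (hγ₁.mul hγ₂).neg.mono (by norm_num) (by norm_num) ?_
  -- the largest numerical constant, `361`, occurs for `(i, n) = (0, 3)`
  all_goals
    norm_num
    nlinarith [abs_nonneg γ]

def logZ (γ x : ℝ) : ℝ := -log (1 + γ * x) / γ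

def scaledExpRem (k j : ℕ) (γ x : ℝ) : ℝ := expRem k (j * -log (1 + γ * x)) / γ ^ k

def zPartial (i n : ℕ) (γ x : ℝ) : ℝ :=
  exp (logZ γ x) * (1 + γ * x)⁻¹ ^ i * partialPoly (fun k j => scaledExpRem k j γ x) γ i n

section
variable {γ x : ℝ}

lemma scaledExpRem_eq (hu : 0 < 1 + γ * x) (k j : ℕ) :
    scaledExpRem k j γ x = ((1 + γ * x)⁻¹ ^ j
      - ∑ m ∈ Finset.range k, (j * -log (1 + γ * x)) ^ m / m.factorial) / γ ^ k := by
  rw [scaledExpRem, expRem, exp_nat_mul, exp_neg, exp_log hu]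

lemma hasDerivAt_one_add_mul_x : HasDerivAt (fun x' => 1 + γ * x') γ x := by
  simpa using ((hasDerivAt_id' x).const_mul γ).const_add 1

lemma hasDerivAt_one_add_mul_γ : HasDerivAt (fun γ' => 1 + γ' * x) x γ := by
  simpa using ((hasDerivAt_id' γ).mul_const x).const_add 1

lemma hasDerivAt_inv_x (hu : 0 < 1 + γ * x) :
    HasDerivAt (fun x' => (1 + γ * x')⁻¹) (-(γ * (1 + γ * x)⁻¹ ^ 2)) x := by
  refine (hasDerivAt_one_add_mul_x.inv hu.ne').congr_deriv ?_
  field_simp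

variable (hγ : γ ≠ 0) (hu : 0 < 1 + γ * x)
include hγ hu

lemma scaledExpRem_one_one : scaledExpRem 1 1 γ x = -(x * (1 + γ * x)⁻¹) := by
  rw [scaledExpRem_eq hu, Finset.sum_range_one]
  field_simp [hu.ne']
  simp

lemma hasDerivAt_logZ_x : HasDerivAt (fun x' => logZ γ x') (-(1 + γ * x)⁻¹) x := by
  refine ((hasDerivAt_one_add_mul_x.log hu.ne').fun_neg.div_const γ).congr_deriv ?_
  field_simp

lemma hasDerivAt_scaledExpRem_x (k j : ℕ) :
    HasDerivAt (fun x' => scaledExpRem (k + 1) j γ x')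
      (-(j * (1 + γ * x)⁻¹ * scaledExpRem k j γ x)) x := by
  have hs := (hasDerivAt_one_add_mul_x.log hu.ne').fun_neg.const_mul (j : ℝ)
  refine (((hasDerivAt_expRem k _).comp x hs).div_const (γ ^ (k + 1))).congr_deriv ?_
  simp only [scaledExpRem]
  field_simp
  ring

lemma hasDerivAt_logZ_γ : HasDerivAt (fun γ' => logZ γ' x) (scaledExpRem 2 1 γ x) γ := by
  refine ((hasDerivAt_one_add_mul_γ.log hu.ne').fun_neg.div (hasDerivAt_id' γ) hγ).congr_deriv ?_
  rw [scaledExpRem_eq hu]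
  simp only [Finset.sum_range_succ, Finset.sum_range_zero, pow_zero, pow_one,
    Nat.factorial_zero, Nat.factorial_one, Nat.cast_one]
  congr 1
  have h : γ * x * (1 + γ * x)⁻¹ = 1 - (1 + γ * x)⁻¹ := by field_simp [hu.ne']; ring
  linear_combination -h

lemma hasDerivAt_inv_γ :
    HasDerivAt (fun γ' => (1 + γ' * x)⁻¹) ((1 + γ * x)⁻¹ * scaledExpRem 1 1 γ x) γ := by
  refine (hasDerivAt_one_add_mul_γ.inv hu.ne').congr_deriv ?_
  rw [scaledExpRem_one_one hγ hu]
  field_simp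

lemma hasDerivAt_scaledExpRem_γ (k j : ℕ) :
    HasDerivAt (fun γ' => scaledExpRem (k + 1) j γ' x)
      ((j * scaledExpRem k j γ x * scaledExpRem 1 1 γ x
        - (k + 1) * scaledExpRem (k + 1) j γ x) / γ) γ := by
  have hs := (hasDerivAt_one_add_mul_γ.log hu.ne').fun_neg.const_mul (j : ℝ)
  refine (((hasDerivAt_expRem k _).comp γ hs).div (hasDerivAt_pow (k + 1) γ)
    (pow_ne_zero _ hγ)).congr_deriv ?_
  rw [scaledExpRem_one_one hγ hu]
  simp only [scaledExpRem, Function.comp_apply, Nat.add_sub_cancel]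
  push_cast
  field_simp
  ring
end

section
variable {γ x : ℝ} (hγ : γ ≠ 0) (hu : 0 < 1 + γ * x)
include hγ hu

lemma hasDerivAt_zPartial_x {i n : ℕ} (hin : i ≤ n) (hn : n ≤ 2) :
    HasDerivAt (fun x' => zPartial i n γ x') (zPartial (i + 1) (n + 1) γ x) x := by
  have hz := (hasDerivAt_logZ_x hγ hu).exp
  have hp := hasDerivAt_inv_x hu
  have hD := hasDerivAt_scaledExpRem_x hγ hu
  interval_cases n <;> interval_cases i
  on_goal 1 => refine ((hz.mul (hp.fun_pow 0)).mul_const 1).congr_deriv ?_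
  on_goal 2 => refine ((hz.mul (hp.fun_pow 0)).mul (hD 1 1)).congr_deriv ?_
  on_goal 3 => refine ((hz.mul (hp.fun_pow 1)).mul_const (-1)).congr_deriv ?_
  on_goal 4 =>
    refine ((hz.mul (hp.fun_pow 0)).mul ((((hD 1 1).fun_pow 2).fun_add (hD 2 2)).fun_sub
      ((hD 2 1).const_mul 4))).congr_deriv ?_
  on_goal 5 =>
    refine ((hz.mul (hp.fun_pow 1)).mul ((hD 0 1).fun_add (hD 1 1)).fun_neg).congr_deriv ?_
  on_goal 6 => refine ((hz.mul (hp.fun_pow 2)).mul_const (1 + γ)).congr_deriv ?_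
  all_goals
    simp only [zPartial, partialPoly, scaledExpRem_eq hu, Finset.sum_range_succ,
      Finset.sum_range_zero, Nat.factorial, Nat.cast_ofNat, Pi.mul_apply]
    push_cast
    generalize (1 + γ * x)⁻¹ = P
    field_simp
    ring

lemma hasDerivAt_zPartial_γ {i n : ℕ} (hin : i ≤ n) (hn : n ≤ 2) :
    HasDerivAt (fun γ' => zPartial i n γ' x) (zPartial i (n + 1) γ x) γ := by
  have hz := (hasDerivAt_logZ_γ hγ hu).exp
  have hp := hasDerivAt_inv_γ hγ hu
  have hD := hasDerivAt_scaledExpRem_γ hγ hu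
  have hγ' := hasDerivAt_id' γ
  interval_cases n <;> interval_cases i
  on_goal 1 => refine ((hz.mul (hp.fun_pow 0)).mul_const 1).congr_deriv ?_
  on_goal 2 => refine ((hz.mul (hp.fun_pow 0)).mul (hD 1 1)).congr_deriv ?_
  on_goal 3 => refine ((hz.mul (hp.fun_pow 1)).mul_const (-1)).congr_deriv ?_
  on_goal 4 =>
    refine ((hz.mul (hp.fun_pow 0)).mul ((((hD 1 1).fun_pow 2).fun_add (hD 2 2)).fun_sub
      ((hD 2 1).const_mul 4))).congr_deriv ?_
  on_goal 5 =>
    refine ((hz.mul (hp.fun_pow 1)).mul ((hD 0 1).fun_add (hD 1 1)).fun_neg).congr_deriv ?_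
  on_goal 6 => refine ((hz.mul (hp.fun_pow 2)).mul (hγ'.const_add 1)).congr_deriv ?_
  all_goals
    simp only [zPartial, partialPoly, scaledExpRem_eq hu, Finset.sum_range_succ,
      Finset.sum_range_zero, Nat.factorial, Nat.cast_ofNat, Pi.mul_apply]
    push_cast
    generalize (1 + γ * x)⁻¹ = P
    field_simp <;> ring

end

lemma zfun_eq_exp_logZ {γ x : ℝ} (hu : 0 < 1 + γ * x) : zfun γ x = exp (logZ γ x) := by
  rw [zfun, rpow_def_of_pos hu, logZ]
  ring_nf

lemma mixedDeriv_zfun (L : List Bool) (hL : L.length ≤ 3) {γ x : ℝ} (hγ : γ ≠ 0)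
    (hu : 0 < 1 + γ * x) : mixedDeriv L zfun γ x = zPartial (L.count true) L.length γ x := by
  induction L generalizing γ x with
  | nil => simp [mixedDeriv, zPartial, partialPoly, zfun_eq_exp_logZ hu]
  | cons b L ih =>
    have hlen : L.length ≤ 2 := by simp only [List.length_cons] at hL; omega
    have hcount : L.count true ≤ L.length := List.count_le_length
    cases b
    · have hopen : IsOpen {γ' : ℝ | γ' ≠ 0 ∧ 0 < 1 + γ' * x} :=
        isOpen_ne.inter
          (isOpen_lt continuous_const (by fun_prop : Continuous fun γ' => 1 + γ' * x))
      have hev : (fun γ' => mixedDeriv L zfun γ' x) =ᶠ[𝓝 γ]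
          fun γ' => zPartial (L.count true) L.length γ' x := by
        filter_upwards [hopen.mem_nhds ⟨hγ, hu⟩] with γ' h using ih (by omega) h.1 h.2
      simp only [mixedDeriv, hev.deriv_eq, (hasDerivAt_zPartial_γ hγ hu hcount hlen).deriv,
        List.count_cons, List.length_cons]
      simp
    · have hopen : IsOpen {x' : ℝ | 0 < 1 + γ * x'} :=
        isOpen_lt continuous_const (by fun_prop : Continuous fun x' => 1 + γ * x')
      have hev : (fun x' => mixedDeriv L zfun γ x') =ᶠ[𝓝 x]
          fun x' => zPartial (L.count true) L.length γ x' := by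
        filter_upwards [hopen.mem_nhds hu] with x' h using ih (by omega) hγ h
      simp only [mixedDeriv, hev.deriv_eq, (hasDerivAt_zPartial_x hγ hu hcount hlen).deriv,
        List.count_cons, List.length_cons]
      simp

lemma monomialBound_scaledExpRem {γ x : ℝ} (hγ : γ ≠ 0) (hu : 0 < 1 + γ * x) (k j : ℕ) :
    MonomialBound (logZ γ x) (1 + γ * x)⁻¹ ((j : ℝ) ^ k) k j (scaledExpRem k j γ x) := by
  have hs : j * -log (1 + γ * x) = j * (γ * logZ γ x) := by rw [logZ]; field_simp
  have hexp : exp (j * -log (1 + γ * x)) = (1 + γ * x)⁻¹ ^ j := by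
    rw [exp_nat_mul, exp_neg, exp_log hu]
  have hmax : max 1 ((1 + γ * x)⁻¹ ^ j) ≤ max 1 (1 + γ * x)⁻¹ ^ j :=
    max_le (one_le_pow₀ (le_max_left _ _))
      (pow_le_pow_left₀ (by positivity) (le_max_right _ _) j)
  have hv : |logZ γ x| ^ k ≤ (1 + |logZ γ x|) ^ k :=
    pow_le_pow_left₀ (abs_nonneg _) (by linarith) k
  unfold MonomialBound scaledExpRem
  rw [abs_div, abs_pow, div_le_iff₀ (by positivity)]
  calc |expRem k (j * -log (1 + γ * x))|
      ≤ |j * -log (1 + γ * x)| ^ k * max 1 (exp (j * -log (1 + γ * x))) := abs_expRem_le k _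
    _ = j ^ k * |logZ γ x| ^ k * max 1 ((1 + γ * x)⁻¹ ^ j) * |γ| ^ k := by
        rw [hexp, hs, abs_mul, abs_mul, Nat.abs_cast]; ring
    _ ≤ j ^ k * (1 + |logZ γ x|) ^ k * max 1 (1 + γ * x)⁻¹ ^ j * |γ| ^ k := by gcongr

section
variable {γ x : ℝ} (hγ : γ ≠ 0) (hu : 0 < 1 + γ * x)
include hγ hu

lemma inv_eq_exp_logZ : (1 + γ * x)⁻¹ = exp (γ * logZ γ x) := by
  rw [logZ, mul_div_cancel₀ _ hγ, exp_neg, exp_log hu]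

lemma abs_zPartial_le {i n : ℕ} (hin : i ≤ n) (hn : n ≤ 3) :
    |zPartial i n γ x| ≤ 400 * (1 + |γ|) ^ 2 * (1 + |logZ γ x|) ^ 6 *
      max (exp ((1 + i * γ) * logZ γ x)) (exp ((1 + n * γ) * logZ γ x)) := by
  have hN := monomialBound_partialPoly (monomialBound_scaledExpRem hγ hu) γ hin hn
  have hmax : exp (logZ γ x) * (1 + γ * x)⁻¹ ^ i * max 1 (1 + γ * x)⁻¹ ^ (n - i) =
      max (exp ((1 + i * γ) * logZ γ x)) (exp ((1 + n * γ) * logZ γ x)) := by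
    rw [inv_eq_exp_logZ hγ hu, ← exp_nat_mul, ← exp_add, exp_mul_max_one_pow, Nat.cast_sub hin]
    congr 2 <;> ring
  unfold MonomialBound at hN
  rw [zPartial, abs_mul, abs_of_pos (by positivity), ← hmax]
  calc _ ≤ exp (logZ γ x) * (1 + γ * x)⁻¹ ^ i *
          (400 * (1 + |γ|) ^ 2 * (1 + |logZ γ x|) ^ 6 * max 1 (1 + γ * x)⁻¹ ^ (n - i)) := by
        gcongr
    _ = _ := by ring
end

lemma abs_zPartial_le_of_near {γ₀ ε γ x : ℝ} (hε : 0 < ε) (hγ : γ ≠ 0) (hu : 0 < 1 + γ * x)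
    (hnear : |γ - γ₀| ≤ min (ε / 6) 1) {i n : ℕ} (hin : i ≤ n) (hn : n ≤ 3) :
    |zPartial i n γ x| ≤ 400 * (2 + |γ₀|) ^ 2 * (1 + (ε / 12)⁻¹) ^ 6 *
      max (max (zfun γ x ^ (1 + (i : ℝ) * γ₀ - ε)) (zfun γ x ^ (1 + (i : ℝ) * γ₀ + ε)))
          (max (zfun γ x ^ (1 + (n : ℝ) * γ₀ - ε)) (zfun γ x ^ (1 + (n : ℝ) * γ₀ + ε))) := by
  set v := logZ γ x
  have hpoly : (1 + |v|) ^ 6 ≤ (1 + (ε / 12)⁻¹) ^ 6 * exp (ε / 2 * |v|) := by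
    calc (1 + |v|) ^ 6 ≤ ((1 + (ε / 12)⁻¹) * exp (ε / 12 * |v|)) ^ 6 :=
          pow_le_pow_left₀ (by positivity) (one_add_le_mul_exp (by positivity) (abs_nonneg v)) 6
      _ = _ := by rw [mul_pow, ← exp_nat_mul]; ring_nf
  have hγ_le : (1 + |γ|) ^ 2 ≤ (2 + |γ₀|) ^ 2 := by
    have := abs_sub_abs_le_abs_sub γ γ₀
    have := hnear.trans (min_le_right _ _)
    exact pow_le_pow_left₀ (by positivity) (by linarith) 2
  have hexp (j : ℕ) (hj : j ≤ 3) : |(1 + j * γ) - (1 + j * γ₀)| ≤ ε / 2 := by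
    have hj' : (j : ℝ) ≤ 3 := by exact_mod_cast hj
    rw [show (1 + j * γ) - (1 + j * γ₀) = j * (γ - γ₀) by ring, abs_mul, Nat.abs_cast]
    nlinarith [hnear.trans (min_le_left _ _), abs_nonneg (γ - γ₀)]
  have hz (c : ℝ) : zfun γ x ^ c = exp (c * v) := by
    rw [zfun_eq_exp_logZ hu, ← exp_mul, mul_comm]
  simp only [hz]
  calc |zPartial i n γ x|
      ≤ 400 * (1 + |γ|) ^ 2 * (1 + |v|) ^ 6 *
          max (exp ((1 + i * γ) * v)) (exp ((1 + n * γ) * v)) :=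
        abs_zPartial_le hγ hu hin hn
    _ ≤ 400 * (2 + |γ₀|) ^ 2 * ((1 + (ε / 12)⁻¹) ^ 6 * exp (ε / 2 * |v|)) *
          max (exp ((1 + i * γ) * v)) (exp ((1 + n * γ) * v)) := by gcongr
    _ = 400 * (2 + |γ₀|) ^ 2 * (1 + (ε / 12)⁻¹) ^ 6 *
          max (exp ((1 + i * γ) * v) * exp (ε / 2 * |v|))
            (exp ((1 + n * γ) * v) * exp (ε / 2 * |v|)) := by
        rw [← max_mul_of_nonneg _ _ (exp_pos _).le]; ring
    _ ≤ _ := by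
        gcongr
        exacts [exp_mul_mul_exp_le_max (hexp i (hin.trans hn)) v,
          exp_mul_mul_exp_le_max (hexp n hn) v]

/-- **Lemma 5 (bounds on the derivatives of `z(γ,x) = (1+γx)^{-1/γ}`)**: for every
`γ₀ ∈ ℝ` and `ε > 0` there are `C > 0`, `δ > 0` such that for all
`γ ∈ (γ₀-δ, γ₀+δ)`, `γ ≠ 0`, all `x` with `1 + γx > 0`, and every mixed partial
derivative of order `n ∈ {1,2,3}` with `i` derivatives in `x`,
`|∂ⁿz/∂xⁱ∂γ^{n-i}| ≤ C max(z^{1+iγ₀-ε}, z^{1+iγ₀+ε}, z^{1+nγ₀-ε}, z^{1+nγ₀+ε})`. -/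
theorem zfun_derivative_bounds (γ₀ ε : ℝ) (hε : 0 < ε) :
    ∃ C > (0:ℝ), ∃ δ > (0:ℝ), ∀ γ ∈ Set.Ioo (γ₀ - δ) (γ₀ + δ), γ ≠ 0 →
      ∀ x : ℝ, 0 < 1 + γ * x →
      ∀ L : List Bool, 1 ≤ L.length → L.length ≤ 3 →
        |mixedDeriv L zfun γ x| ≤
          C * max (max (zfun γ x ^ (1 + (L.count true : ℝ) * γ₀ - ε))
                       (zfun γ x ^ (1 + (L.count true : ℝ) * γ₀ + ε)))
                  (max (zfun γ x ^ (1 + (L.length : ℝ) * γ₀ - ε))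
                       (zfun γ x ^ (1 + (L.length : ℝ) * γ₀ + ε))) := by
  refine ⟨400 * (2 + |γ₀|) ^ 2 * (1 + (ε / 12)⁻¹) ^ 6, by positivity,
    min (ε / 6) 1, by positivity, fun γ hγ hγ₀ x hu L _ hL => ?_⟩
  have hnear : |γ - γ₀| ≤ min (ε / 6) 1 :=
    (abs_sub_lt_iff.mpr ⟨by linarith [hγ.2], by linarith [hγ.1]⟩).le
  rw [mixedDeriv_zfun L hL hγ₀ hu]
  exact abs_zPartial_le_of_near hε hγ₀ hu hnear List.count_le_length hL

end BMMLE
end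
end

section
/- Uniform bound on the second-order function along the exponential reparametrization: for every γ0 ∈ ℝ, ρ ≤ 0 and ε > 0 there exists C > 0 such that for all s ∈ (0,1), |H_{γ0,ρ}(1/(−log s))| ≤ C · s^{−ε} · (1−s)^{min(−γ0,0)−ε}, where H_{γ0,ρ}(x) = ∫_1^x t^{γ0−1} ( ∫_1^t u^{ρ−1} du ) dt for x > 0. -/
open MeasureTheory ProbabilityTheory Filter Real Topology Matrix Set

noncomputable section

/-!
Both integrals in `H_{γ,ρ}` start at `1`, so each is controlled by the oriented integral of a
dominating power `t ^ (c - 1)`, whose value `(x ^ c - 1) / c` is at most `x ^ c / |c|` as soon as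
`c` has the sign of `log x` (written `1 ≤ x ^ c`). This gives `|H(x)| ≲ x ^ (max γ 0 + ε)` for
`x ≥ 1` and `|H(x)| ≲ x ^ (min (γ + ρ) 0 - ε)` for `x ≤ 1`. At `x = 1 / (-log s)`, the first
bound becomes a power of `1 - s` because `-log s ≥ 1 - s`, and the second is a power of `-log s`,
which is absorbed by `s ^ (-ε) = exp (ε * -log s)`.
-/

namespace BMMLE

open scoped Interval

lemma one_le_rpow_of_mem_uIcc {x t d : ℝ} (hx : 0 < x) (hxd : 1 ≤ x ^ d)
    (ht : t ∈ uIcc 1 x) : 1 ≤ t ^ d := by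
  have ht0 : 0 < t := lt_of_lt_of_le (lt_min one_pos hx) ht.1
  rcases le_total 0 d with hd | hd
  · rcases le_or_gt 1 t with h1t | ht1
    · exact one_le_rpow h1t hd
    · have hxt : x ≤ t := (min_le_iff.1 ht.1).resolve_left ht1.not_ge
      exact hxd.trans (rpow_le_rpow hx.le hxt hd)
  · rcases le_or_gt t 1 with ht1 | h1t
    · exact one_le_rpow_of_pos_of_le_one_of_nonpos ht0 ht1 hd
    · have htx : t ≤ x := (le_max_iff.1 ht.2).resolve_left h1t.not_ge
      exact hxd.trans (rpow_le_rpow_of_nonpos ht0 htx hd)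

lemma abs_integral_rpow_sub_one_le {x c : ℝ} (hx : 0 < x) (hc : c ≠ 0) (hxc : 1 ≤ x ^ c) :
    |∫ t in (1:ℝ)..x, t ^ (c - 1)| ≤ x ^ c / |c| := by
  have h0 : (0:ℝ) ∉ uIcc 1 x := fun h => (lt_min one_pos hx).not_ge h.1
  rw [integral_rpow (Or.inr ⟨by contrapose! hc; linarith, h0⟩), sub_add_cancel, one_rpow,
    abs_div, abs_of_nonneg (by linarith)]
  gcongr
  linarith

lemma abs_integral_le_of_abs_le_mul_rpow {f : ℝ → ℝ} {x c K : ℝ} (hx : 0 < x) (hc : c ≠ 0)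
    (hxc : 1 ≤ x ^ c) (hK : 0 ≤ K) (hf : ∀ t ∈ Ι 1 x, |f t| ≤ K * t ^ (c - 1)) :
    |∫ t in (1:ℝ)..x, f t| ≤ K * (x ^ c / |c|) := by
  have h0 : (0:ℝ) ∉ uIcc 1 x := fun h => (lt_min one_pos hx).not_ge h.1
  calc |∫ t in (1:ℝ)..x, f t|
      ≤ |∫ t in (1:ℝ)..x, K * t ^ (c - 1)| :=
        intervalIntegral.norm_integral_le_abs_of_norm_le (f := f) (μ := volume)
          ((ae_restrict_iff' measurableSet_uIoc).2 (ae_of_all _ hf))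
          ((intervalIntegral.intervalIntegrable_rpow (Or.inr h0)).const_mul K)
    _ = K * |∫ t in (1:ℝ)..x, t ^ (c - 1)| := by
        rw [intervalIntegral.integral_const_mul, abs_mul, abs_of_nonneg hK]
    _ ≤ K * (x ^ c / |c|) := by gcongr; exact abs_integral_rpow_sub_one_le hx hc hxc

lemma abs_Hso_le (γ ρ a c : ℝ) {x : ℝ} (hx : 0 < x) (ha : a ≠ 0) (hc : c ≠ 0)
    (hxa : 1 ≤ x ^ a) (hxρ : 1 ≤ x ^ (a - ρ)) (hxγ : 1 ≤ x ^ (c - γ - a)) (hxc : 1 ≤ x ^ c) :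
    |Hso γ ρ x| ≤ x ^ c / (|a| * |c|) := by
  unfold Hso
  refine (abs_integral_le_of_abs_le_mul_rpow hx hc hxc (K := 1 / |a|) (by positivity)
    fun t ht => ?_).trans_eq (by field_simp)
  have htx : t ∈ uIcc 1 x := uIoc_subset_uIcc ht
  have ht0 : 0 < t := lt_of_lt_of_le (lt_min one_pos hx) htx.1
  have hinner : |∫ u in (1:ℝ)..t, u ^ (ρ - 1)| ≤ 1 * (t ^ a / |a|) := by
    refine abs_integral_le_of_abs_le_mul_rpow ht0 ha (one_le_rpow_of_mem_uIcc hx hxa htx)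
      zero_le_one fun u hu => ?_
    have hux : u ∈ uIcc 1 x := uIcc_subset_uIcc_left htx (uIoc_subset_uIcc hu)
    have hu0 : 0 < u := lt_of_lt_of_le (lt_min one_pos hx) hux.1
    rw [abs_of_nonneg (rpow_nonneg hu0.le _), one_mul,
      show a - 1 = (ρ - 1) + (a - ρ) by ring, rpow_add hu0]
    exact le_mul_of_one_le_right (rpow_nonneg hu0.le _) (one_le_rpow_of_mem_uIcc hx hxρ hux)
  have hsplit : t ^ (c - 1) = t ^ (γ - 1) * t ^ a * t ^ (c - γ - a) := by
    rw [← rpow_add ht0, ← rpow_add ht0]; ring_nf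
  rw [abs_mul, abs_of_nonneg (rpow_nonneg ht0.le _), hsplit]
  calc t ^ (γ - 1) * |∫ u in (1:ℝ)..t, u ^ (ρ - 1)|
      ≤ t ^ (γ - 1) * (t ^ a / |a|) := by
        gcongr; simpa only [one_mul] using hinner
    _ ≤ t ^ (γ - 1) * t ^ a * t ^ (c - γ - a) / |a| := by
        rw [← mul_div_assoc]
        refine div_le_div_of_nonneg_right ?_ (abs_nonneg a)
        exact le_mul_of_one_le_right (by positivity) (one_le_rpow_of_mem_uIcc hx hxγ htx)
    _ = 1 / |a| * (t ^ (γ - 1) * t ^ a * t ^ (c - γ - a)) := by ring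

lemma abs_Hso_le_of_one_le (γ ρ : ℝ) {ε x : ℝ} (hρ : ρ ≤ 0) (hε : 0 < ε) (hx : 1 ≤ x) :
    |Hso γ ρ x| ≤ x ^ (max γ 0 + ε) / ε ^ 2 := by
  have hc : 0 < max γ 0 + ε := by positivity
  calc |Hso γ ρ x| ≤ x ^ (max γ 0 + ε) / (|ε| * |max γ 0 + ε|) :=
        abs_Hso_le γ ρ ε _ (by linarith) hε.ne' hc.ne' (one_le_rpow hx hε.le)
          (one_le_rpow hx (by linarith)) (one_le_rpow hx (by linarith [le_max_left γ 0]))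
          (one_le_rpow hx hc.le)
    _ ≤ x ^ (max γ 0 + ε) / ε ^ 2 := by
        rw [abs_of_pos hε, abs_of_pos hc, sq]
        gcongr
        linarith [le_max_right γ 0]

lemma abs_Hso_le_of_le_one (γ ρ : ℝ) {ε x : ℝ} (hρ : ρ ≤ 0) (hε : 0 < ε) (hx0 : 0 < x)
    (hx1 : x ≤ 1) : |Hso γ ρ x| ≤ x ^ (min (γ + ρ) 0 - ε) / ε ^ 2 := by
  have hc : min (γ + ρ) 0 - ε < 0 := by linarith [min_le_right (γ + ρ) 0]
  have hle_one {d : ℝ} (hd : d ≤ 0) : 1 ≤ x ^ d :=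
    one_le_rpow_of_pos_of_le_one_of_nonpos hx0 hx1 hd
  calc |Hso γ ρ x| ≤ x ^ (min (γ + ρ) 0 - ε) / (|ρ - ε| * |min (γ + ρ) 0 - ε|) :=
        abs_Hso_le γ ρ (ρ - ε) _ hx0 (by linarith) hc.ne (hle_one (by linarith))
          (hle_one (by linarith)) (hle_one (by linarith [min_le_left (γ + ρ) 0])) (hle_one hc.le)
    _ ≤ x ^ (min (γ + ρ) 0 - ε) / ε ^ 2 := by
        rw [abs_of_neg (by linarith), abs_of_neg hc, sq]
        gcongr <;> linarith [min_le_right (γ + ρ) 0]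

lemma rpow_le_mul_exp {L M ε : ℝ} (hL : 0 ≤ L) (hM : 0 < M) (hε : 0 < ε) :
    L ^ M ≤ (M / ε) ^ M * exp (ε * L) := by
  have hlin : L ≤ M / ε * exp (ε / M * L) :=
    calc L = M / ε * (ε / M * L) := by field_simp
      _ ≤ M / ε * exp (ε / M * L) := by
        gcongr; linarith [add_one_le_exp (ε / M * L)]
  calc L ^ M ≤ (M / ε * exp (ε / M * L)) ^ M := rpow_le_rpow hL hlin hM.le
    _ = (M / ε) ^ M * exp (ε * L) := by
      rw [mul_rpow (by positivity) (exp_pos _).le, ← exp_mul]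
      field_simp

lemma neg_log_rpow_le {s M ε : ℝ} (hs0 : 0 < s) (hs1 : s < 1) (hM : 0 < M) (hε : 0 < ε) :
    (-log s) ^ M ≤ (M / ε) ^ M * s ^ (-ε) := by
  have hexp : exp (ε * -log s) = s ^ (-ε) := by
    rw [rpow_def_of_pos hs0]; ring_nf
  exact hexp ▸ rpow_le_mul_exp (neg_nonneg.2 (log_neg hs0 hs1).le) hM hε

lemma one_div_neg_log_rpow_le {s p : ℝ} (hs0 : 0 < s) (hs1 : s < 1) (hp : 0 ≤ p) :
    (1 / -log s) ^ p ≤ (1 - s) ^ (-p) := by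
  have hlog : 1 - s ≤ -log s := by linarith [log_le_sub_one_of_pos hs0]
  rw [rpow_neg (by linarith), ← inv_rpow (by linarith), ← one_div]
  exact rpow_le_rpow (one_div_pos.2 (neg_pos.2 (log_neg hs0 hs1))).le
    (one_div_le_one_div_of_le (by linarith) hlog) hp

/-- **Uniform bound on the second-order function along the exponential
reparametrization** (eq. (33)): for every `γ₀ ∈ ℝ`, `ρ ≤ 0` and `ε > 0` there is
`C > 0` with `|H_{γ₀,ρ}(1/(-log s))| ≤ C s^{-ε} (1-s)^{min(-γ₀,0)-ε}` for all
`s ∈ (0,1)`. -/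
theorem Hso_uniform_bound (γ₀ ρ ε : ℝ) (hρ : ρ ≤ 0) (hε : 0 < ε) :
    ∃ C > (0:ℝ), ∀ s ∈ Set.Ioo (0:ℝ) 1,
      |Hso γ₀ ρ (1 / (-Real.log s))| ≤
        C * s ^ (-ε) * (1 - s) ^ (min (-γ₀) 0 - ε) := by
  set M := ε - min (γ₀ + ρ) 0
  have hM : 0 < M := by linarith [min_le_right (γ₀ + ρ) 0]
  set K := (M / ε) ^ M
  refine ⟨(1 + K) / ε ^ 2, by positivity, fun s ⟨hs0, hs1⟩ => ?_⟩
  have hL : 0 < -log s := neg_pos.2 (log_neg hs0 hs1)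
  have hs : 1 ≤ s ^ (-ε) := one_le_rpow_of_pos_of_le_one_of_nonpos hs0 hs1.le (by linarith)
  have h1s : 1 ≤ (1 - s) ^ (min (-γ₀) 0 - ε) := one_le_rpow_of_pos_of_le_one_of_nonpos
    (by linarith) (by linarith) (by linarith [min_le_right (-γ₀) 0])
  rcases le_total (-log s) 1 with hL1 | h1L
  · have hexp : min (-γ₀) 0 - ε = -(max γ₀ 0 + ε) := by
      rw [neg_add, ← min_neg_neg, neg_zero, sub_eq_add_neg]
    calc |Hso γ₀ ρ (1 / -log s)| ≤ (1 / -log s) ^ (max γ₀ 0 + ε) / ε ^ 2 :=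
          abs_Hso_le_of_one_le γ₀ ρ hρ hε (by rw [le_div_iff₀ hL]; linarith)
      _ ≤ 1 / ε ^ 2 * 1 * (1 - s) ^ (min (-γ₀) 0 - ε) := by
          rw [hexp, mul_one, one_div_mul_eq_div]
          gcongr
          exact one_div_neg_log_rpow_le hs0 hs1 (by positivity)
      _ ≤ _ := by gcongr; linarith [show 0 ≤ K by positivity]
  · calc |Hso γ₀ ρ (1 / -log s)| ≤ (1 / -log s) ^ (min (γ₀ + ρ) 0 - ε) / ε ^ 2 :=
          abs_Hso_le_of_le_one γ₀ ρ hρ hε (by positivity) (by rw [div_le_one hL]; linarith)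
      _ = (-log s) ^ M / ε ^ 2 := by rw [one_div, inv_rpow hL.le, ← rpow_neg hL.le, neg_sub]
      _ ≤ K / ε ^ 2 * s ^ (-ε) * 1 := by
          rw [mul_one, div_mul_eq_mul_div]
          gcongr
          exact neg_log_rpow_le hs0 hs1 hM hε
      _ ≤ _ := by gcongr; linarith

end BMMLE
end
end

section
/- Closed form for the location component of the bias vector (case ρ < 0): let γ0 > −1/2, γ0 ≠ 0, ρ < 0 with γ0 + ρ ≠ 0, and θ0 = (γ0, 0, 1). Then ∫_0^1 (∂²ℓ/∂x∂μ)(θ0, Q_{γ0}(s)) · H_{γ0,ρ}(1/(−log s)) ds = (1+γ0)/(γ0·ρ·(γ0+ρ)) · ( −(γ0+ρ)·Γ(1+γ0) + (1+γ0)·ρ·Γ(1+2γ0) + γ0·(1−ρ)·Γ(1+γ0−ρ) ), where Γ is Euler's Gamma function. -/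
/-!
Substituting `s = e^{-t}` turns `Q_γ(s)` into `(t^{-γ} - 1)/γ`, so that `1 + γ Q_γ(s) = t^{-γ}`,
the mixed derivative becomes `(1 + γ)(t - γ) t^{2γ}` and `H_{γ,ρ}(1/t)` is a combination of
`t^{-γ-ρ}`, `t^{-γ}` and `1`. The integrand is then a combination of three terms
`e^{-t} (t - γ) t^{b-1}` with `b ∈ {1 + γ - ρ, 1 + γ, 1 + 2γ}`, each integrating to `(b - γ) Γ(b)`
by `Γ(b + 1) = b Γ(b)`.
-/

open MeasureTheory ProbabilityTheory Filter Real Topology Matrix Set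

noncomputable section

namespace BMMLE

section LocationScore

variable {γ : ℝ}

lemma ll_update_θ₀_one (hγ : γ ≠ 0) (μ x : ℝ) :
    ll (Function.update (θ₀ γ) 1 μ) x
      = -(1 + 1 / γ) * Real.log (1 + γ * (x - μ)) - (1 + γ * (x - μ)) ^ (-1 / γ) := by
  have hθ : Function.update (θ₀ γ) 1 μ = ![γ, μ, 1] := by
    funext j
    fin_cases j <;> simp [Function.update, θ₀]
  rw [hθ]
  simp [ll, hγ]

lemma score_one_θ₀_s19 (hγ : γ ≠ 0) {x : ℝ} (hx : 0 < 1 + γ * x) :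
    score 1 (θ₀ γ) x = (1 + γ) * (1 + γ * x)⁻¹ - (1 + γ * x) ^ (-1 / γ - 1) := by
  have hz : HasDerivAt (fun μ => 1 + γ * (x - μ)) (-γ) 0 := by
    simpa using ((hasDerivAt_id (0 : ℝ)).const_sub x).const_mul γ |>.const_add 1
  have hz0 : (1 : ℝ) + γ * (x - 0) = 1 + γ * x := by ring
  have hlog := hz.log (by rw [hz0]; exact hx.ne')
  have hpow := hz.rpow_const (p := -1 / γ) (Or.inl (by rw [hz0]; exact hx.ne'))
  rw [hz0] at hlog hpow
  have hderiv : HasDerivAt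
      (fun μ => -(1 + 1 / γ) * Real.log (1 + γ * (x - μ)) - (1 + γ * (x - μ)) ^ (-1 / γ))
      (-(1 + 1 / γ) * (-γ / (1 + γ * x)) - -γ * (-1 / γ) * (1 + γ * x) ^ (-1 / γ - 1)) 0 :=
    (hlog.const_mul _).sub hpow
  have hθ : θ₀ γ 1 = 0 := by simp [θ₀]
  rw [score, pd, hθ, funext (ll_update_θ₀_one hγ · x), hderiv.deriv]
  field_simp
  ring

lemma dxscore_one_θ₀ (hγ : γ ≠ 0) {x : ℝ} (hx : 0 < 1 + γ * x) :
    dxscore 1 (θ₀ γ) x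
      = (1 + γ) * ((1 + γ * x) ^ (-1 / γ - 2) - γ * ((1 + γ * x) ^ 2)⁻¹) := by
  have hscore : (fun y => score 1 (θ₀ γ) y) =ᶠ[𝓝 x]
      fun y => (1 + γ) * (1 + γ * y)⁻¹ - (1 + γ * y) ^ (-1 / γ - 1) := by
    have hopen : IsOpen {y : ℝ | 0 < 1 + γ * y} := isOpen_lt continuous_const (by fun_prop)
    filter_upwards [hopen.mem_nhds hx] with y hy using score_one_θ₀_s19 hγ hy
  have hz : HasDerivAt (fun y => 1 + γ * y) γ x := by
    simpa using ((hasDerivAt_id x).const_mul γ).const_add 1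
  have hderiv : HasDerivAt (fun y => (1 + γ) * (1 + γ * y)⁻¹ - (1 + γ * y) ^ (-1 / γ - 1))
      ((1 + γ) * (-γ / (1 + γ * x) ^ 2) - γ * (-1 / γ - 1) * (1 + γ * x) ^ (-1 / γ - 1 - 1)) x :=
    ((hz.inv hx.ne').const_mul (1 + γ)).sub (hz.rpow_const (Or.inl hx.ne'))
  rw [dxscore, hscore.deriv_eq, hderiv.deriv,
    show -1 / γ - 1 - 1 = -1 / γ - 2 by ring]
  field_simp
  ring

lemma one_add_mul_Qgev_exp_neg (hγ : γ ≠ 0) (t : ℝ) :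
    1 + γ * Qgev γ (Real.exp (-t)) = t ^ (-γ) := by
  rw [Qgev, if_neg hγ, Real.log_exp, neg_neg]
  field_simp
  ring

lemma dxscore_one_θ₀_Qgev_exp_neg (hγ : γ ≠ 0) {t : ℝ} (ht : 0 < t) :
    dxscore 1 (θ₀ γ) (Qgev γ (Real.exp (-t))) = (1 + γ) * ((t - γ) * t ^ (2 * γ)) := by
  have hz := one_add_mul_Qgev_exp_neg hγ t
  rw [dxscore_one_θ₀ hγ (hz ▸ Real.rpow_pos_of_pos ht _), hz, ← Real.rpow_natCast,
    ← Real.rpow_mul ht.le, ← Real.rpow_mul ht.le, ← Real.rpow_neg ht.le,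
    show -γ * (-1 / γ - 2) = 1 + 2 * γ by field_simp; ring,
    show -(-γ * ((2 : ℕ) : ℝ)) = 2 * γ by push_cast; ring,
    Real.rpow_add ht, Real.rpow_one]
  ring

end LocationScore

lemma integral_one_rpow_sub_one {r x : ℝ} (hr : r ≠ 0) (hx : 0 < x) :
    ∫ u in (1 : ℝ)..x, u ^ (r - 1) = (x ^ r - 1) / r := by
  rw [integral_rpow (Or.inr ⟨by contrapose! hr; linarith, notMem_uIcc_of_lt one_pos hx⟩),
    sub_add_cancel, Real.one_rpow]

lemma Hso_of_pos {γ ρ x : ℝ} (hγ : γ ≠ 0) (hρ : ρ ≠ 0) (hγρ : γ + ρ ≠ 0) (hx : 0 < x) :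
    Hso γ ρ x = ((x ^ (γ + ρ) - 1) / (γ + ρ) - (x ^ γ - 1) / γ) / ρ := by
  have hpos : ∀ t ∈ uIcc (1 : ℝ) x, 0 < t := fun t ht =>
    lt_of_lt_of_le (lt_min one_pos hx) ht.1
  have hinner : ∀ t ∈ uIcc (1 : ℝ) x,
      t ^ (γ - 1) * ∫ u in (1 : ℝ)..t, u ^ (ρ - 1) = (t ^ (γ + ρ - 1) - t ^ (γ - 1)) / ρ := by
    intro t ht
    rw [integral_one_rpow_sub_one hρ (hpos t ht),
      show γ + ρ - 1 = (γ - 1) + ρ by ring, Real.rpow_add (hpos t ht)]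
    ring
  have hint : ∀ r : ℝ, IntervalIntegrable (fun t : ℝ => t ^ r) volume 1 x := fun r =>
    intervalIntegral.intervalIntegrable_rpow (Or.inr (notMem_uIcc_of_lt one_pos hx))
  rw [Hso, intervalIntegral.integral_congr hinner, intervalIntegral.integral_div,
    intervalIntegral.integral_sub (hint _) (hint _), integral_one_rpow_sub_one hγρ hx,
    integral_one_rpow_sub_one hγ hx]

lemma integral_Ioo_zero_one_eq_integral_Ioi_exp_neg (g : ℝ → ℝ) :
    ∫ s in Ioo (0 : ℝ) 1, g s = ∫ t in Ioi (0 : ℝ), Real.exp (-t) * g (Real.exp (-t)) := by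
  have himage : (fun t => Real.exp (-t)) '' Ioi 0 = Ioo 0 1 := by
    rw [← Function.comp_def, image_comp, image_neg_Ioi, neg_zero, Real.image_exp_Iio,
      Real.exp_zero]
  have hderiv : ∀ t ∈ Ioi (0 : ℝ),
      HasDerivWithinAt (fun t => Real.exp (-t)) (-Real.exp (-t)) (Ioi 0) t := fun t _ => by
    simpa using (hasDerivAt_neg t).exp.hasDerivWithinAt
  have hinj : InjOn (fun t => Real.exp (-t)) (Ioi 0) := fun a _ b _ hab =>
    neg_injective (Real.exp_injective hab)
  rw [← himage, integral_image_eq_integral_abs_deriv_smul measurableSet_Ioi hderiv hinj]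
  simp only [abs_neg, abs_of_pos (Real.exp_pos _), smul_eq_mul]

section GammaIntegrals

variable (c : ℝ) {b : ℝ}

lemma exp_neg_mul_sub_mul_rpow_eq {t : ℝ} (ht : 0 < t) :
    Real.exp (-t) * ((t - c) * t ^ (b - 1))
      = Real.exp (-t) * t ^ (b + 1 - 1) - c * (Real.exp (-t) * t ^ (b - 1)) := by
  rw [show b + 1 - 1 = 1 + (b - 1) by ring, Real.rpow_add ht, Real.rpow_one]
  ring

lemma integrableOn_exp_neg_mul_sub_mul_rpow (hb : 0 < b) :
    IntegrableOn (fun t => Real.exp (-t) * ((t - c) * t ^ (b - 1))) (Ioi 0) :=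
  ((Real.GammaIntegral_convergent (by linarith)).sub
    ((Real.GammaIntegral_convergent hb).const_mul c)).congr_fun
    (fun _ ht => (exp_neg_mul_sub_mul_rpow_eq c ht).symm) measurableSet_Ioi

lemma integral_exp_neg_mul_sub_mul_rpow (hb : 0 < b) :
    ∫ t in Ioi (0 : ℝ), Real.exp (-t) * ((t - c) * t ^ (b - 1)) = (b - c) * Real.Gamma b := by
  rw [setIntegral_congr_fun measurableSet_Ioi (fun _ ht => exp_neg_mul_sub_mul_rpow_eq c ht),
    integral_sub (Real.GammaIntegral_convergent (by linarith))
      ((Real.GammaIntegral_convergent hb).const_mul c),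
    integral_const_mul, ← Real.Gamma_eq_integral (by linarith), ← Real.Gamma_eq_integral hb,
    Real.Gamma_add_one hb.ne']
  ring

end GammaIntegrals

lemma exp_neg_mul_dxscore_mul_Hso_eq {γ ρ t : ℝ} (hγ : γ ≠ 0) (hρ : ρ ≠ 0)
    (hγρ : γ + ρ ≠ 0) (ht : 0 < t) :
    Real.exp (-t) * (dxscore 1 (θ₀ γ) (Qgev γ (Real.exp (-t)))
        * Hso γ ρ (1 / (-Real.log (Real.exp (-t)))))
      = (1 + γ) / ρ *
        (1 / (γ + ρ) * (Real.exp (-t) * ((t - γ) * t ^ ((1 + γ - ρ) - 1)))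
          - 1 / γ * (Real.exp (-t) * ((t - γ) * t ^ ((1 + γ) - 1)))
          + ρ / (γ * (γ + ρ)) * (Real.exp (-t) * ((t - γ) * t ^ ((1 + 2 * γ) - 1)))) := by
  rw [dxscore_one_θ₀_Qgev_exp_neg hγ ht, Real.log_exp, neg_neg,
    Hso_of_pos hγ hρ hγρ (one_div_pos.2 ht), one_div, Real.inv_rpow ht.le,
    Real.inv_rpow ht.le, show 1 + γ - ρ - 1 = 2 * γ - (γ + ρ) by ring,
    show 1 + γ - 1 = 2 * γ - γ by ring, show 1 + 2 * γ - 1 = 2 * γ by ring,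
    Real.rpow_sub ht, Real.rpow_sub ht]
  have hA := (Real.rpow_pos_of_pos ht γ).ne'
  have hB := (Real.rpow_pos_of_pos ht (γ + ρ)).ne'
  field_simp
  ring

/-- **Closed form for the location component of the bias vector, case `ρ < 0`**
(Appendix A): for `γ₀ > -1/2`, `γ₀ ≠ 0`, `ρ < 0`, `γ₀ + ρ ≠ 0`,
`∫₀¹ ∂²ℓ/∂x∂μ(θ₀, Q_{γ₀}(s)) H_{γ₀,ρ}(1/(-log s)) ds
  = (1+γ₀)/(γ₀ρ(γ₀+ρ)) (-(γ₀+ρ)Γ(1+γ₀) + (1+γ₀)ρΓ(1+2γ₀) + γ₀(1-ρ)Γ(1+γ₀-ρ))`. -/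
theorem bias_location_component_closed_form
    (γ₀ ρ : ℝ) (hγ : -(1/2) < γ₀) (hγ0 : γ₀ ≠ 0) (hρ : ρ < 0) (hγρ : γ₀ + ρ ≠ 0) :
    ∫ s in Set.Ioo (0:ℝ) 1,
        dxscore 1 (θ₀ γ₀) (Qgev γ₀ s) * Hso γ₀ ρ (1 / (-Real.log s))
      = (1 + γ₀) / (γ₀ * ρ * (γ₀ + ρ)) *
        (-(γ₀ + ρ) * Real.Gamma (1 + γ₀) + (1 + γ₀) * ρ * Real.Gamma (1 + 2 * γ₀)
          + γ₀ * (1 - ρ) * Real.Gamma (1 + γ₀ - ρ)) := by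
  have h₁ : 0 < 1 + γ₀ - ρ := by linarith
  have h₂ : 0 < 1 + γ₀ := by linarith
  have h₃ : 0 < 1 + 2 * γ₀ := by linarith
  have hI : ∀ {b : ℝ}, 0 < b → ∀ a : ℝ, IntegrableOn
      (fun t => a * (Real.exp (-t) * ((t - γ₀) * t ^ (b - 1)))) (Ioi 0) :=
    fun hb a => (integrableOn_exp_neg_mul_sub_mul_rpow γ₀ hb).const_mul a
  rw [integral_Ioo_zero_one_eq_integral_Ioi_exp_neg,
    setIntegral_congr_fun measurableSet_Ioi
      (fun _ ht => exp_neg_mul_dxscore_mul_Hso_eq hγ0 hρ.ne hγρ ht),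
    integral_const_mul, integral_add, integral_sub, integral_const_mul, integral_const_mul,
    integral_const_mul, integral_exp_neg_mul_sub_mul_rpow γ₀ h₁,
    integral_exp_neg_mul_sub_mul_rpow γ₀ h₂, integral_exp_neg_mul_sub_mul_rpow γ₀ h₃]
  · field_simp
    ring
  exacts [hI h₁ _, hI h₂ _, (hI h₁ _).sub (hI h₂ _), hI h₃ _]

end BMMLE
end
end
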